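/- For every rooted digraph D with root r and every v ∈ V−r, ℑ_D(v) is exactly the set of strongly maximal systems of internally disjoint r→v paths of D, where a system P of internally disjoint r→v paths is strongly maximal if |Q∖P| ≤ |P∖Q| holds for every system Q of internally disjoint r→v paths in D. -/

import Mathlib

namespace FlamePaper

universe u
variable {V : Type u}

/-- A (nonempty, repetition-free) directed path, given by the list of its vertices;
its edge set consists of the pairs of consecutive vertices. A one-vertex list is the
trivial `v→v` path. -/
structure DiPath (V : Type u) where
  verts : List V
  ne : verts ≠ []
  nodup : verts.Nodup

namespace DiPath
variable (P : DiPath V)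
def first : V := P.verts.head P.ne
def last : V := P.verts.getLast P.ne
def vertexSet : Set V := {x | x ∈ P.verts}
def edges : Set (V × V) := {e | e ∈ P.verts.zip P.verts.tail}
def internal : Set V := P.vertexSet \ {P.first, P.last}
/-- The last edge of `P` (as a set; empty for the trivial path). -/
def lastEdge : Set (V × V) := {e ∈ P.edges | e.2 = P.last}
end DiPath

/-- `P` is a path of the digraph `D`. -/
def IsPathIn (D : Set (V × V)) (P : DiPath V) : Prop := P.edges ⊆ D

/-- `P` is an `a→b` path in `D`. -/
def IsPath (D : Set (V × V)) (a b : V) (P : DiPath V) : Prop :=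
  IsPathIn D P ∧ P.first = a ∧ P.last = b

/-- The set of ingoing edges of `v` in `D`. -/
def inEdges (D : Set (V × V)) (v : V) : Set (V × V) := {e ∈ D | e.2 = v}

/-- The set of outgoing edges of `v` in `D`. -/
def outEdges (D : Set (V × V)) (v : V) : Set (V × V) := {e ∈ D | e.1 = v}

/-- A rooted digraph: the root has no ingoing edges. -/
def IsRooted (D : Set (V × V)) (r : V) : Prop := inEdges D r = ∅

/-- `Ps` is a system of internally disjoint `r→v` paths in `D`: any two distinct
members share exactly the vertices `r` and `v`. -/
def IntDisjSystem (D : Set (V × V)) (r v : V) (Ps : Set (DiPath V)) : Prop :=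
  (∀ P ∈ Ps, IsPath D r v P) ∧
  ∀ P ∈ Ps, ∀ Q ∈ Ps, P ≠ Q → P.vertexSet ∩ Q.vertexSet = {r, v}

/-- `A_last(Ps)`: the set of last edges of the paths in `Ps`. -/
def lastEdges (Ps : Set (DiPath V)) : Set (V × V) := ⋃ P ∈ Ps, P.lastEdge

/-- `𝒢_D(v)`: the set of those `I ⊆ in_D(v)` which arise as the set of last edges
of a system of internally disjoint `r→v` paths of `D`. -/
def GSet (D : Set (V × V)) (r v : V) : Set (Set (V × V)) :=
  {I | ∃ Ps, IntDisjSystem D r v Ps ∧ lastEdges Ps = I}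

/-- `Ps ∈ ℑ_D(v)`: an internally disjoint system of `r→v` paths of `D` from each member
of which one can choose either an internal vertex or an edge so that the resulting set
meets every `r→v` path of `D`. -/
def EMSystem (D : Set (V × V)) (r v : V) (Ps : Set (DiPath V)) : Prop :=
  IntDisjSystem D r v Ps ∧
  ∃ sel : DiPath V → V ⊕ (V × V),
    (∀ P ∈ Ps, (∀ x, sel P = Sum.inl x → x ∈ P.internal) ∧
              (∀ e, sel P = Sum.inr e → e ∈ P.edges)) ∧
    ∀ Q : DiPath V, IsPath D r v Q →
      ∃ P ∈ Ps, (∀ x, sel P = Sum.inl x → x ∈ Q.vertexSet) ∧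
               (∀ e, sel P = Sum.inr e → e ∈ Q.edges)

/-- The path-system `Ps` lies in `L`. -/
def LiesIn (Ps : Set (DiPath V)) (L : Set (V × V)) : Prop := ∀ P ∈ Ps, IsPathIn L P

/-- `L` is a `D`-vertex-large spanning subdigraph of `D`. -/
def IsLarge (D L : Set (V × V)) (r : V) : Prop :=
  L ⊆ D ∧ ∀ v, v ≠ r → ∃ Ps, EMSystem D r v Ps ∧ LiesIn Ps L

/-- `F` is a vertex-flame with root `r`. -/
def IsFlame (F : Set (V × V)) (r : V) : Prop :=
  ∀ v, v ≠ r → inEdges F v ∈ GSet F r v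

/-- `F` is a quasi-vertex-flame with root `r`. -/
def IsQuasiFlame (F : Set (V × V)) (r : V) : Prop :=
  ∀ v, v ≠ r → ∀ I ⊆ inEdges F v, I.Finite → I ∈ GSet F r v

/-- `S` separates `b` from `a` in `D`: every `a→b` path of `D` meets `S`. -/
def Separates (D : Set (V × V)) (a b : V) (S : Set V) : Prop :=
  ∀ P : DiPath V, IsPath D a b P → (P.vertexSet ∩ S).Nonempty

/-- `𝔖_D(v)`: the Erdős–Menger separations corresponding to `v`. -/
def SepSet (D : Set (V × V)) (r v : V) : Set (Set V) :=
  {S | r ∉ S ∧ v ∉ S ∧ Separates (D \ {(r, v)}) r v S ∧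
    ∃ Ps, IntDisjSystem D r v Ps ∧
      ∃ sel : DiPath V → V, (∀ P ∈ Ps, sel P ∈ P.internal) ∧ S = sel '' Ps}

/-- The entrance of `X` with respect to `D`. -/
def entrance (D : Set (V × V)) (X : Set V) : Set V :=
  {v ∈ X | ∃ u, u ∉ X ∧ (u, v) ∈ D}

/-- `int_D(X) = X ∖ ent_D(X)`. -/
def interiorSet (D : Set (V × V)) (X : Set V) : Set V := X \ entrance D X

/-- `B` is a `v`-bubble of `D` (with root `r`): `B ⊆ V − r` and there is a `v`-infan
`{P_u : u ∈ ent_D(B)}` in `D ∩ (B × B)` where `P_u` starts at `u`. -/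
def IsBubble (D : Set (V × V)) (r v : V) (B : Set V) : Prop :=
  r ∉ B ∧
  ∃ F : V → DiPath V,
    (∀ u ∈ entrance D B, IsPath (D ∩ B ×ˢ B) u v (F u)) ∧
    ∀ u ∈ entrance D B, ∀ u' ∈ entrance D B, u ≠ u' →
      (F u).vertexSet ∩ (F u').vertexSet = {v}

/-- `bubb_D(v)`. -/
def bubbles (D : Set (V × V)) (r v : V) : Set (Set V) := {B | IsBubble D r v B}

/-- `B_{v,D}`: the union of all `v`-bubbles of `D`. -/
def maxBubble (D : Set (V × V)) (r v : V) : Set V := ⋃₀ bubbles D r v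

/-- `B_{S,v,D}`: the set of vertices `u` such that every `r→u` path of `D−rv` meets `S`. -/
def Bset (D : Set (V × V)) (r v : V) (S : Set V) : Set V :=
  {u | ∀ P : DiPath V, IsPath (D \ {(r, v)}) r u P → (P.vertexSet ∩ S).Nonempty}

/-- `Ps` is an `r`-fan in `D`: paths of `D` starting at `r`, any two distinct members
having only the vertex `r` in common. -/
def IsRFan (D : Set (V × V)) (r : V) (Ps : Set (DiPath V)) : Prop :=
  (∀ P ∈ Ps, IsPathIn D P ∧ P.first = r) ∧
  ∀ P ∈ Ps, ∀ Q ∈ Ps, P ≠ Q → P.vertexSet ∩ Q.vertexSet = {r}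

/-- The set of first vertices of the paths in `Ps`. -/
def Vfirst (Ps : Set (DiPath V)) : Set V := DiPath.first '' Ps

/-- The set of last vertices of the paths in `Ps`. -/
def Vlast (Ps : Set (DiPath V)) : Set V := DiPath.last '' Ps

/-- `P` is an `X→Y` path in `D`: exactly its first vertex lies in `X` and
exactly its last vertex lies in `Y`. -/
def IsXYPath (D : Set (V × V)) (X Y : Set V) (P : DiPath V) : Prop :=
  IsPathIn D P ∧ P.vertexSet ∩ X = {P.first} ∧ P.vertexSet ∩ Y = {P.last}

/-- `Ps` is a system of pairwise (vertex-)disjoint `X→Y` paths of `D`. -/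
def DisjXYSystem (D : Set (V × V)) (X Y : Set V) (Ps : Set (DiPath V)) : Prop :=
  (∀ P ∈ Ps, IsXYPath D X Y P) ∧
  ∀ P ∈ Ps, ∀ Q ∈ Ps, P ≠ Q → P.vertexSet ∩ Q.vertexSet = ∅

/-- `κ_D(r,v)`: the maximum size of a (finite) system of internally disjoint `r→v`
paths of `D`. -/
noncomputable def kappa (D : Set (V × V)) (r v : V) : ℕ :=
  sSup {n : ℕ | ∃ Ps : Set (DiPath V), IntDisjSystem D r v Ps ∧ Ps.Finite ∧ Ps.ncard = n}

namespace DiPath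

lemma length_pos (P : DiPath V) : 0 < P.verts.length := List.length_pos_iff.2 P.ne

lemma ext' {P Q : DiPath V} (h : P.verts = Q.verts) : P = Q := by
  cases P; cases Q; simpa using h

lemma getElem_idx_eq (l : List V) {i j : ℕ} (h : i = j) (hi : i < l.length) :
    l[i]'hi = l[j]'(h ▸ hi) := by subst h; rfl

lemma first_eq (P : DiPath V) : P.first = P.verts[0]'P.length_pos :=
  List.head_eq_getElem _

lemma last_eq (P : DiPath V) :
    P.last = P.verts[P.verts.length - 1]'(by have := P.length_pos; omega) :=
  List.getLast_eq_getElem _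

lemma mem_vertexSet_iff {P : DiPath V} {x : V} : x ∈ P.vertexSet ↔ x ∈ P.verts := Iff.rfl

lemma mem_edges_iff {P : DiPath V} {a b : V} :
    (a, b) ∈ P.edges ↔ ∃ i, ∃ h : i + 1 < P.verts.length, P.verts[i] = a ∧ P.verts[i + 1] = b := by
  have hlen : (P.verts.zip P.verts.tail).length = P.verts.length - 1 := by
    simp [List.length_zip, List.length_tail]
  constructor
  · intro h
    rw [edges, Set.mem_setOf_eq, List.mem_iff_getElem] at h
    obtain ⟨i, hi, he⟩ := h
    have hi' : i + 1 < P.verts.length := by omega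
    refine ⟨i, hi', ?_, ?_⟩
    · have := List.getElem_zip (l := P.verts) (l' := P.verts.tail) (i := i) (h := hi)
      rw [this] at he
      exact congrArg Prod.fst he
    · have := List.getElem_zip (l := P.verts) (l' := P.verts.tail) (i := i) (h := hi)
      rw [this] at he
      have h2 := congrArg Prod.snd he
      simp only at h2
      rwa [List.getElem_tail] at h2
  · rintro ⟨i, hi, ha, hb⟩
    rw [edges, Set.mem_setOf_eq, List.mem_iff_getElem]
    refine ⟨i, by omega, ?_⟩
    rw [List.getElem_zip]
    have ht : P.verts.tail[i]'(by simp [List.length_tail]; omega) = P.verts[i+1] :=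
      List.getElem_tail _
    rw [ht, ha, hb]

lemma edge_mem_vertexSet {P : DiPath V} {a b : V} (h : (a, b) ∈ P.edges) :
    a ∈ P.vertexSet ∧ b ∈ P.vertexSet := by
  rw [mem_edges_iff] at h
  obtain ⟨i, hi, ha, hb⟩ := h
  constructor
  · rw [mem_vertexSet_iff, List.mem_iff_getElem]; exact ⟨i, by omega, ha⟩
  · rw [mem_vertexSet_iff, List.mem_iff_getElem]; exact ⟨i + 1, hi, hb⟩

lemma edge_ne {P : DiPath V} {a b : V} (h : (a, b) ∈ P.edges) : a ≠ b := by
  rw [mem_edges_iff] at h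
  obtain ⟨i, hi, ha, hb⟩ := h
  intro hab
  rw [← ha, ← hb] at hab
  have := (P.nodup.getElem_inj_iff).1 hab
  omega

end DiPath

section PathFacts
variable {D : Set (V × V)} {r v : V} {Q : DiPath V}

lemma IsPath.two_le_length (h : IsPath D r v Q) (hrv : r ≠ v) : 2 ≤ Q.verts.length := by
  by_contra hlen
  have h1 : Q.verts.length = 1 := by have := Q.length_pos; omega
  have hr : Q.verts[0]'(Q.length_pos) = r := by rw [← Q.first_eq]; exact h.2.1
  have hv : Q.verts[Q.verts.length - 1]'(by have := Q.length_pos; omega) = v := by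
    rw [← Q.last_eq]; exact h.2.2
  apply hrv
  rw [← hr, ← hv]
  congr 1
  omega

lemma IsPath.getElem_zero (h : IsPath D r v Q) : Q.verts[0]'Q.length_pos = r := by
  rw [← Q.first_eq]; exact h.2.1

lemma IsPath.getElem_last (h : IsPath D r v Q) :
    Q.verts[Q.verts.length - 1]'(by have := Q.length_pos; omega) = v := by
  rw [← Q.last_eq]; exact h.2.2

lemma IsPath.index_of_r (h : IsPath D r v Q) {i : ℕ} (hi : i < Q.verts.length)
    (hr : Q.verts[i] = r) : i = 0 := by
  have h0 := h.getElem_zero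
  have : Q.verts[i]'hi = Q.verts[0]'Q.length_pos := by rw [hr, h0]
  exact (Q.nodup.getElem_inj_iff).1 this

lemma IsPath.index_of_v (h : IsPath D r v Q) {i : ℕ} (hi : i < Q.verts.length)
    (hv : Q.verts[i] = v) : i = Q.verts.length - 1 := by
  have h0 := h.getElem_last
  have : Q.verts[i]'hi = Q.verts[Q.verts.length - 1]'(by have := Q.length_pos; omega) := by
    rw [hv, h0]
  exact (Q.nodup.getElem_inj_iff).1 this

lemma IsPath.mem_internal_iff (h : IsPath D r v Q) {x : V} :
    x ∈ Q.internal ↔ ∃ i, ∃ hi : i < Q.verts.length,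
      Q.verts[i] = x ∧ i ≠ 0 ∧ i ≠ Q.verts.length - 1 := by
  constructor
  · rintro ⟨hmem, hne⟩
    rw [DiPath.mem_vertexSet_iff, List.mem_iff_getElem] at hmem
    obtain ⟨i, hi, hx⟩ := hmem
    refine ⟨i, hi, hx, ?_, ?_⟩
    · intro h0
      apply hne
      left
      rw [← hx, Q.first_eq]
      subst h0; rfl
    · intro h0
      apply hne
      right
      rw [← hx, Q.last_eq]
      simp only [Set.mem_singleton_iff]
      congr 1
  · rintro ⟨i, hi, hx, h0, hl⟩
    constructor
    · rw [DiPath.mem_vertexSet_iff, List.mem_iff_getElem]; exact ⟨i, hi, hx⟩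
    · intro hmem
      rcases hmem with h1 | h1
      · rw [h1, h.2.1] at hx
        exact h0 (h.index_of_r hi hx)
      · simp only [Set.mem_singleton_iff] at h1
        rw [h1, h.2.2] at hx
        exact hl (h.index_of_v hi hx)

lemma IsPath.internal_ne (h : IsPath D r v Q) {x : V} (hx : x ∈ Q.internal) :
    x ≠ r ∧ x ≠ v := by
  obtain ⟨hmem, hne⟩ := hx
  constructor
  · intro h0; exact hne (Or.inl (by rw [h0, h.2.1]))
  · intro h0; exact hne (Or.inr (by simp [h0, h.2.2]))

lemma IsPath.rv_edge (h : IsPath D r v Q) (hrv : r ≠ v) (he : (r, v) ∈ Q.edges) :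
    Q.verts = [r, v] := by
  rw [DiPath.mem_edges_iff] at he
  obtain ⟨i, hi, ha, hb⟩ := he
  have h0 : i = 0 := h.index_of_r (by omega) ha
  have h1 : i + 1 = Q.verts.length - 1 := h.index_of_v hi hb
  have hlen : Q.verts.length = 2 := by omega
  subst h0
  apply List.ext_getElem (by simp [hlen])
  intro j hj hj'
  simp only [List.length_cons, List.length_nil] at hj'
  interval_cases j
  · simpa using ha
  · simpa using hb

lemma IsPath.r_mem (h : IsPath D r v Q) : r ∈ Q.vertexSet := by
  rw [DiPath.mem_vertexSet_iff, List.mem_iff_getElem]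
  exact ⟨0, Q.length_pos, h.getElem_zero⟩

lemma IsPath.v_mem (h : IsPath D r v Q) : v ∈ Q.vertexSet := by
  rw [DiPath.mem_vertexSet_iff, List.mem_iff_getElem]
  exact ⟨Q.verts.length - 1, by have := Q.length_pos; omega, h.getElem_last⟩

end PathFacts


section SystemFacts

/-- Union of the edge sets of the paths of a system. -/
def UEdges (Ps : Set (DiPath V)) : Set (V × V) := ⋃ P ∈ Ps, P.edges

/-- Union of the internal-vertex sets of the paths of a system. -/
def UInt (Ps : Set (DiPath V)) : Set V := ⋃ P ∈ Ps, P.internal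

lemma mem_UEdges_iff {Ps : Set (DiPath V)} {e : V × V} :
    e ∈ UEdges Ps ↔ ∃ P ∈ Ps, e ∈ P.edges := by simp [UEdges]

lemma mem_UInt_iff {Ps : Set (DiPath V)} {x : V} :
    x ∈ UInt Ps ↔ ∃ P ∈ Ps, x ∈ P.internal := by simp [UInt]

variable {D : Set (V × V)} {r v : V} {Ps : Set (DiPath V)}

lemma IsRooted.not_to_r (hroot : IsRooted D r) {a : V} : (a, r) ∉ D := by
  intro h
  have : (a, r) ∈ inEdges D r := ⟨h, rfl⟩
  rw [hroot] at this
  exact this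

lemma UEdges_subset (hPs : IntDisjSystem D r v Ps) : UEdges Ps ⊆ D := by
  intro e he
  rw [mem_UEdges_iff] at he
  obtain ⟨P, hP, hPe⟩ := he
  exact (hPs.1 P hP).1 hPe

/-- Two paths of the system sharing a vertex other than `r`, `v` are equal. -/
lemma shared_vertex (hPs : IntDisjSystem D r v Ps) {P P' : DiPath V}
    (hP : P ∈ Ps) (hP' : P' ∈ Ps) {x : V} (hx : x ∈ P.vertexSet) (hx' : x ∈ P'.vertexSet)
    (hxr : x ≠ r) (hxv : x ≠ v) : P = P' := by
  by_contra hne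
  have := hPs.2 P hP P' hP' hne
  have hmem : x ∈ P.vertexSet ∩ P'.vertexSet := ⟨hx, hx'⟩
  rw [this] at hmem
  rcases hmem with h | h
  · exact hxr h
  · exact hxv h

/-- Edges of distinct paths of the system are distinct (given `v ≠ r`). -/
lemma edge_unique_path (hroot : IsRooted D r) (hv : v ≠ r) (hPs : IntDisjSystem D r v Ps)
    {P P' : DiPath V} (hP : P ∈ Ps) (hP' : P' ∈ Ps) {e : V × V}
    (he : e ∈ P.edges) (he' : e ∈ P'.edges) : P = P' := by
  obtain ⟨a, b⟩ := e
  have hab : a ≠ b := DiPath.edge_ne he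
  have haP := (DiPath.edge_mem_vertexSet he).1
  have hbP := (DiPath.edge_mem_vertexSet he).2
  have haP' := (DiPath.edge_mem_vertexSet he').1
  have hbP' := (DiPath.edge_mem_vertexSet he').2
  by_cases har : a = r
  · subst har
    -- b ≠ r trivially; if b ≠ v use shared_vertex on b, else e = (r,v)
    by_cases hbv : b = v
    · subst hbv
      have h1 := (hPs.1 P hP).rv_edge (Ne.symm hv) he
      have h2 := (hPs.1 P' hP').rv_edge (Ne.symm hv) he'
      exact DiPath.ext' (h1.trans h2.symm)
    · exact shared_vertex hPs hP hP' hbP hbP' (Ne.symm hab) hbv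
  · by_cases hav : a = v
    · exfalso
      have hp := hPs.1 P hP
      rw [DiPath.mem_edges_iff] at he
      obtain ⟨i, hi, ha, _⟩ := he
      have hvv : P.verts[i]'(by omega) = v := by rw [ha, hav]
      have := hp.index_of_v (by omega) hvv
      omega
    · exact shared_vertex hPs hP hP' haP haP' har hav

lemma ue_no_self_loop (hPs : IntDisjSystem D r v Ps) {a : V} : (a, a) ∉ UEdges Ps := by
  intro h
  rw [mem_UEdges_iff] at h
  obtain ⟨P, _, hPe⟩ := h
  exact DiPath.edge_ne hPe rfl

lemma ue_in_unique (hroot : IsRooted D r) (hv : v ≠ r) (hPs : IntDisjSystem D r v Ps)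
    {a a' u : V} (h : (a, u) ∈ UEdges Ps) (h' : (a', u) ∈ UEdges Ps) (huv : u ≠ v) :
    a = a' := by
  rw [mem_UEdges_iff] at h h'
  obtain ⟨P, hP, he⟩ := h
  obtain ⟨P', hP', he'⟩ := h'
  have hur : u ≠ r := by
    intro hur
    exact hroot.not_to_r (a := a) (by rw [← hur]; exact (hPs.1 P hP).1 he)
  have hPP' : P = P' := by
    refine shared_vertex hPs hP hP' (DiPath.edge_mem_vertexSet he).2
      (DiPath.edge_mem_vertexSet he').2 hur huv
  subst hPP'
  rw [DiPath.mem_edges_iff] at he he'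
  obtain ⟨i, hi, ha, hu⟩ := he
  obtain ⟨j, hj, ha', hu'⟩ := he'
  have : P.verts[i+1]'hi = P.verts[j+1]'hj := by rw [hu, hu']
  have hij : i + 1 = j + 1 := (P.nodup.getElem_inj_iff).1 this
  have hij' : i = j := by omega
  subst hij'
  rw [← ha, ← ha']

lemma ue_out_unique (hroot : IsRooted D r) (hv : v ≠ r) (hPs : IntDisjSystem D r v Ps)
    {u b b' : V} (h : (u, b) ∈ UEdges Ps) (h' : (u, b') ∈ UEdges Ps) (hur : u ≠ r) :
    b = b' := by
  rw [mem_UEdges_iff] at h h'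
  obtain ⟨P, hP, he⟩ := h
  obtain ⟨P', hP', he'⟩ := h'
  have huv : u ≠ v := by
    intro huv
    have hp := hPs.1 P hP
    rw [DiPath.mem_edges_iff] at he
    obtain ⟨i, hi, ha, _⟩ := he
    have hvv : P.verts[i]'(by omega) = v := by rw [ha, huv]
    have := hp.index_of_v (by omega) hvv
    omega
  have hPP' : P = P' := shared_vertex hPs hP hP' (DiPath.edge_mem_vertexSet he).1
    (DiPath.edge_mem_vertexSet he').1 hur huv
  subst hPP'
  rw [DiPath.mem_edges_iff] at he he'
  obtain ⟨i, hi, ha, hu⟩ := he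
  obtain ⟨j, hj, ha', hu'⟩ := he'
  have : P.verts[i]'(by omega) = P.verts[j]'(by omega) := by rw [ha, ha']
  have hij : i = j := (P.nodup.getElem_inj_iff).1 this
  subst hij
  rw [← hu, ← hu']

lemma ui_not_r (hPs : IntDisjSystem D r v Ps) : r ∉ UInt Ps := by
  intro h
  rw [mem_UInt_iff] at h
  obtain ⟨P, hP, hint⟩ := h
  exact ((hPs.1 P hP).internal_ne hint).1 rfl

lemma ui_not_v (hPs : IntDisjSystem D r v Ps) : v ∉ UInt Ps := by
  intro h
  rw [mem_UInt_iff] at h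
  obtain ⟨P, hP, hint⟩ := h
  exact ((hPs.1 P hP).internal_ne hint).2 rfl

lemma ue_to_ui (hroot : IsRooted D r) (hPs : IntDisjSystem D r v Ps)
    {a u : V} (h : (a, u) ∈ UEdges Ps) (huv : u ≠ v) : u ∈ UInt Ps := by
  rw [mem_UEdges_iff] at h
  obtain ⟨P, hP, he⟩ := h
  have hp := hPs.1 P hP
  rw [mem_UInt_iff]
  refine ⟨P, hP, ?_⟩
  rw [DiPath.mem_edges_iff] at he
  obtain ⟨i, hi, _, hu⟩ := he
  refine (hp.mem_internal_iff).2 ?_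
  refine ⟨i + 1, hi, hu, by omega, ?_⟩
  intro hlast
  apply huv
  rw [← hu, DiPath.getElem_idx_eq P.verts hlast]
  exact hp.getElem_last

lemma ue_from_ui (hroot : IsRooted D r) (hv : v ≠ r) (hPs : IntDisjSystem D r v Ps)
    {u b : V} (h : (u, b) ∈ UEdges Ps) (hur : u ≠ r) : u ∈ UInt Ps := by
  rw [mem_UEdges_iff] at h
  obtain ⟨P, hP, he⟩ := h
  have hp := hPs.1 P hP
  rw [mem_UInt_iff]
  refine ⟨P, hP, ?_⟩
  rw [DiPath.mem_edges_iff] at he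
  obtain ⟨i, hi, hu, _⟩ := he
  refine (hp.mem_internal_iff).2 ?_
  refine ⟨i, by omega, hu, ?_, by omega⟩
  intro h0
  apply hur
  rw [← hu, DiPath.getElem_idx_eq P.verts h0]
  exact hp.getElem_zero

lemma ui_mem_edges (hPs : IntDisjSystem D r v Ps) {u : V} (h : u ∈ UInt Ps) :
    (∃ a, (a, u) ∈ UEdges Ps) ∧ (∃ b, (u, b) ∈ UEdges Ps) := by
  rw [mem_UInt_iff] at h
  obtain ⟨P, hP, hint⟩ := h
  have hp := hPs.1 P hP
  rw [hp.mem_internal_iff] at hint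
  obtain ⟨i, hi, hx, h0, hl⟩ := hint
  constructor
  · refine ⟨P.verts[i-1]'(by omega), ?_⟩
    rw [mem_UEdges_iff]
    refine ⟨P, hP, ?_⟩
    rw [DiPath.mem_edges_iff]
    exact ⟨i - 1, by omega, rfl, by rw [← hx]; congr 1; omega⟩
  · refine ⟨P.verts[i+1]'(by omega), ?_⟩
    rw [mem_UEdges_iff]
    refine ⟨P, hP, ?_⟩
    rw [DiPath.mem_edges_iff]
    exact ⟨i, by omega, hx, rfl⟩

/-- The second vertex of a path in a system determines the path. -/
lemma second_inj (hroot : IsRooted D r) (hv : v ≠ r) (hPs : IntDisjSystem D r v Ps)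
    {P P' : DiPath V} (hP : P ∈ Ps) (hP' : P' ∈ Ps)
    (h : P.verts[1]'((hPs.1 P hP).two_le_length (Ne.symm hv)) =
         P'.verts[1]'((hPs.1 P' hP').two_le_length (Ne.symm hv))) : P = P' := by
  have hp := hPs.1 P hP
  have hp' := hPs.1 P' hP'
  have h2 : 2 ≤ P.verts.length := hp.two_le_length (Ne.symm hv)
  have h2' : 2 ≤ P'.verts.length := hp'.two_le_length (Ne.symm hv)
  have hxr : P.verts[1]'(by omega) ≠ r := by
    intro hxr
    have := hp.index_of_r (by omega) hxr
    omega
  by_cases hxv : P.verts[1]'(by omega) = v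
  · have h1v : P'.verts[1]'(by omega) = v := by rw [← h]; exact hxv
    have hl : P.verts.length - 1 = 1 := (hp.index_of_v (by omega) hxv).symm
    have hl' : P'.verts.length - 1 = 1 := (hp'.index_of_v (by omega) h1v).symm
    apply DiPath.ext'
    apply List.ext_getElem (by omega)
    intro j hj hj'
    have : j ≤ 1 := by omega
    interval_cases j
    · rw [hp.getElem_zero, hp'.getElem_zero]
    · exact h
  · refine shared_vertex hPs hP hP' ?_ ?_ hxr hxv
    · rw [DiPath.mem_vertexSet_iff, List.mem_iff_getElem]; exact ⟨1, by omega, rfl⟩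
    · rw [DiPath.mem_vertexSet_iff, List.mem_iff_getElem]; exact ⟨1, by omega, h.symm⟩

/-- The first edge of a path in a system is `(r, second vertex)`. -/
lemma first_edge_mem (hv : v ≠ r) (hPs : IntDisjSystem D r v Ps)
    {P : DiPath V} (hP : P ∈ Ps) :
    (r, P.verts[1]'((hPs.1 P hP).two_le_length (Ne.symm hv))) ∈ P.edges := by
  have hp := hPs.1 P hP
  have h2 : 2 ≤ P.verts.length := hp.two_le_length (Ne.symm hv)
  rw [DiPath.mem_edges_iff]
  exact ⟨0, by omega, hp.getElem_zero, rfl⟩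

lemma edge_from_r (hPs : IntDisjSystem D r v Ps) {P : DiPath V} (hP : P ∈ Ps) {b : V}
    (h : (r, b) ∈ P.edges) : ∃ h2 : 1 < P.verts.length, b = P.verts[1]'h2 := by
  have hp := hPs.1 P hP
  rw [DiPath.mem_edges_iff] at h
  obtain ⟨i, hi, ha, hb⟩ := h
  have h0 : i = 0 := hp.index_of_r (by omega) ha
  subst h0
  exact ⟨hi, hb.symm⟩

end SystemFacts

section Forward
variable {D : Set (V × V)} {r v : V}

/-- Two internally disjoint `r→v` paths sharing an edge are equal. -/
lemma shared_edge_eq (hroot : IsRooted D r) (hv : v ≠ r) {Q Q' : DiPath V}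
    (hQ : IsPath D r v Q) (hQ' : IsPath D r v Q')
    (hdisj : Q.vertexSet ∩ Q'.vertexSet = {r, v}) {e : V × V}
    (he : e ∈ Q.edges) (he' : e ∈ Q'.edges) : Q = Q' := by
  obtain ⟨a, b⟩ := e
  have hab : a ≠ b := DiPath.edge_ne he
  have h1 : a ∈ Q.vertexSet ∩ Q'.vertexSet :=
    ⟨(DiPath.edge_mem_vertexSet he).1, (DiPath.edge_mem_vertexSet he').1⟩
  have h2 : b ∈ Q.vertexSet ∩ Q'.vertexSet :=
    ⟨(DiPath.edge_mem_vertexSet he).2, (DiPath.edge_mem_vertexSet he').2⟩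
  rw [hdisj] at h1 h2
  have hbD : (a, b) ∈ D := hQ.1 he
  have hbr : b ≠ r := fun h' => hroot.not_to_r (h' ▸ hbD)
  have hbv : b = v := h2.resolve_left hbr
  have har : a = r := by
    rcases h1 with h | h
    · exact h
    · exact absurd (h.trans hbv.symm) hab
  subst har; subst hbv
  have e1 := hQ.rv_edge (Ne.symm hv) he
  have e2 := hQ'.rv_edge (Ne.symm hv) he'
  exact DiPath.ext' (e1.trans e2.symm)

lemma em_to_strong (hroot : IsRooted D r) (hv : v ≠ r) {Ps : Set (DiPath V)}
    (hEM : EMSystem D r v Ps)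
    {Qs : Set (DiPath V)} (hQs : IntDisjSystem D r v Qs) :
    Cardinal.mk ↥(Qs \ Ps) ≤ Cardinal.mk ↥(Ps \ Qs) := by
  obtain ⟨hPs, sel, hsel1, hsel2⟩ := hEM
  have key : ∀ Q : ↥(Qs \ Ps), ∃ P, P ∈ Ps \ Qs ∧
      (∀ x, sel P = Sum.inl x → x ∈ (Q : DiPath V).vertexSet) ∧
      (∀ e, sel P = Sum.inr e → e ∈ (Q : DiPath V).edges) := by
    rintro ⟨Q, hQmem, hQnot⟩
    obtain ⟨P, hP, hhit⟩ := hsel2 Q (hQs.1 Q hQmem)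
    refine ⟨P, ⟨hP, ?_⟩, hhit.1, hhit.2⟩
    intro hPQs
    have hne : P ≠ Q := by rintro rfl; exact hQnot hP
    have hdisj := hQs.2 P hPQs Q hQmem hne
    cases hsP : sel P with
    | inl x =>
      have hx := (hsel1 P hP).1 x hsP
      have hxQ := hhit.1 x hsP
      have hmem : x ∈ P.vertexSet ∩ Q.vertexSet := ⟨hx.1, hxQ⟩
      rw [hdisj] at hmem
      have hni := (hPs.1 P hP).internal_ne hx
      rcases hmem with h | h
      · exact hni.1 h
      · exact hni.2 h
    | inr e =>
      have heP := (hsel1 P hP).2 e hsP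
      have heQ := hhit.2 e hsP
      exact hne (shared_edge_eq hroot hv (hPs.1 P hP) (hQs.1 Q hQmem) hdisj heP heQ)
  choose f hf1 hf2 hf3 using key
  have hinj : Function.Injective fun Q : ↥(Qs \ Ps) => (⟨f Q, hf1 Q⟩ : ↥(Ps \ Qs)) := by
    intro Q Q' hQQ'
    simp only [Subtype.mk.injEq] at hQQ'
    by_contra hne
    have hvne : (Q : DiPath V) ≠ (Q' : DiPath V) := fun h => hne (Subtype.ext h)
    have hdisj := hQs.2 Q Q.2.1 Q' Q'.2.1 hvne
    set P := f Q with hPdef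
    have hP : P ∈ Ps := (hf1 Q).1
    cases hsP : sel P with
    | inl x =>
      have hx := (hsel1 P hP).1 x hsP
      have hxQ := hf2 Q x hsP
      have hxQ2 := hf2 Q' x (hQQ' ▸ hsP)
      have hmem : x ∈ (Q : DiPath V).vertexSet ∩ (Q' : DiPath V).vertexSet := ⟨hxQ, hxQ2⟩
      rw [hdisj] at hmem
      have hni := (hPs.1 P hP).internal_ne hx
      rcases hmem with h | h
      · exact hni.1 h
      · exact hni.2 h
    | inr e =>
      have heQ := hf3 Q e hsP
      have heQ2 := hf3 Q' e (hQQ' ▸ hsP)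
      exact hvne (shared_edge_eq hroot hv (hQs.1 Q Q.2.1) (hQs.1 Q' Q'.2.1) hdisj heQ heQ2)
  exact Cardinal.mk_le_of_injective hinj

end Forward

section Residual

/-- One step in the residual graph of the path system `Ps` in `D`. -/
def Step (D : Set (V × V)) (Ps : Set (DiPath V)) (v : V) : V × Bool → V × Bool → Prop :=
  fun s t =>
    (∃ a b, a ≠ b ∧ s = (a, true) ∧ t = (b, false) ∧ (a, b) ∈ D ∧ (a, b) ∉ UEdges Ps) ∨
    (∃ a b, a ≠ b ∧ s = (b, false) ∧ t = (a, true) ∧ (a, b) ∈ UEdges Ps) ∨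
    (∃ u, s = (u, false) ∧ t = (u, true) ∧ u ∉ UInt Ps ∧ u ≠ v) ∨
    (∃ u, s = (u, true) ∧ t = (u, false) ∧ u ∈ UInt Ps)

/-- Reachability in the residual graph, starting from `(r, out)`. -/
def Reach (D : Set (V × V)) (Ps : Set (DiPath V)) (r v : V) (s : V × Bool) : Prop :=
  Relation.ReflTransGen (Step D Ps v) (r, true) s

/-- `j`-th vertex of a path (with default `r`). -/
def pvert (P : DiPath V) (r : V) (j : ℕ) : V := P.verts.getD j r

variable {D : Set (V × V)} {r v : V} {Ps : Set (DiPath V)}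

lemma pv_eq {P : DiPath V} {j : ℕ} (h : j < P.verts.length) :
    pvert P r j = P.verts[j]'h := List.getD_eq_getElem _ _ h

lemma ue_no_out_v (hPs : IntDisjSystem D r v Ps) {b : V} : (v, b) ∉ UEdges Ps := by
  intro h
  rw [mem_UEdges_iff] at h
  obtain ⟨P, hP, he⟩ := h
  have hp := hPs.1 P hP
  rw [DiPath.mem_edges_iff] at he
  obtain ⟨i, hi, ha, _⟩ := he
  have := hp.index_of_v (by omega) ha
  omega

lemma reach_base : Reach D Ps r v (r, true) := Relation.ReflTransGen.refl

lemma reach_fwd {a b : V} (hD : (a, b) ∈ D) (hUE : (a, b) ∉ UEdges Ps) (hab : a ≠ b)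
    (h : Reach D Ps r v (a, true)) : Reach D Ps r v (b, false) :=
  h.tail (Or.inl ⟨a, b, hab, rfl, rfl, hD, hUE⟩)

lemma reach_back_edge (hPs : IntDisjSystem D r v Ps) {a b : V} (hUE : (a, b) ∈ UEdges Ps)
    (h : Reach D Ps r v (b, false)) : Reach D Ps r v (a, true) := by
  have hab : a ≠ b := by rintro rfl; exact ue_no_self_loop hPs hUE
  exact h.tail (Or.inr (Or.inl ⟨a, b, hab, rfl, rfl, hUE⟩))

lemma reach_split {u : V} (hUI : u ∉ UInt Ps) (huv : u ≠ v)
    (h : Reach D Ps r v (u, false)) : Reach D Ps r v (u, true) :=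
  h.tail (Or.inr (Or.inr (Or.inl ⟨u, rfl, rfl, hUI, huv⟩)))

lemma reach_out_to_in {u : V} (hUI : u ∈ UInt Ps)
    (h : Reach D Ps r v (u, true)) : Reach D Ps r v (u, false) :=
  h.tail (Or.inr (Or.inr (Or.inr ⟨u, rfl, rfl, hUI⟩)))

lemma reach_not_vtrue (hv : v ≠ r) (hPs : IntDisjSystem D r v Ps) :
    ¬ Reach D Ps r v (v, true) := by
  intro h
  rcases h.cases_tail with h | ⟨c, _, hstep⟩
  · exact hv (Prod.ext_iff.1 h).1
  · rcases hstep with ⟨a, b, hab, hs, ht, _, _⟩ | ⟨a, b, hab, hs, ht, hUE⟩ |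
      ⟨u, hs, ht, _, huv⟩ | ⟨u, hs, ht, _⟩
    · exact Bool.noConfusion (Prod.ext_iff.1 ht).2
    · have hva : a = v := (Prod.ext_iff.1 ht).1.symm
      subst hva
      exact ue_no_out_v hPs hUE
    · exact huv (Prod.ext_iff.1 ht).1.symm
    · exact Bool.noConfusion (Prod.ext_iff.1 ht).2

section PerPath
variable {P : DiPath V} (hroot : IsRooted D r) (hv : v ≠ r) (hPs : IntDisjSystem D r v Ps)
  (hP : P ∈ Ps)

lemma pv_zero (hp : IsPath D r v P) : pvert P r 0 = r := by
  rw [pv_eq P.length_pos]; exact hp.getElem_zero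

lemma pv_last (hp : IsPath D r v P) : pvert P r (P.verts.length - 1) = v := by
  rw [pv_eq (by have := P.length_pos; omega)]; exact hp.getElem_last

lemma pv_edge (hp : IsPath D r v P) {j : ℕ} (h : j + 1 < P.verts.length) :
    (pvert P r j, pvert P r (j + 1)) ∈ P.edges := by
  rw [pv_eq (by omega : j < P.verts.length), pv_eq h]
  rw [DiPath.mem_edges_iff]
  exact ⟨j, h, rfl, rfl⟩

lemma pv_internal (hp : IsPath D r v P) {j : ℕ} (h1 : 1 ≤ j)
    (h2 : j + 1 ≤ P.verts.length - 1) : pvert P r j ∈ P.internal := by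
  rw [pv_eq (by omega : j < P.verts.length)]
  rw [hp.mem_internal_iff]
  exact ⟨j, by omega, rfl, by omega, by omega⟩

include hPs hP in
lemma reach_step_down {j : ℕ} (h1 : 1 ≤ j) (h2 : j + 1 ≤ P.verts.length - 1)
    (h : Reach D Ps r v (pvert P r j, true)) : Reach D Ps r v (pvert P r (j - 1), true) := by
  have hp := hPs.1 P hP
  have hUI : pvert P r j ∈ UInt Ps := by
    rw [mem_UInt_iff]; exact ⟨P, hP, pv_internal hp h1 (by omega)⟩
  have hin := reach_out_to_in hUI h
  have hedge : (pvert P r (j - 1), pvert P r j) ∈ UEdges Ps := by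
    rw [mem_UEdges_iff]
    refine ⟨P, hP, ?_⟩
    have := pv_edge hp (j := j - 1) (by omega)
    simpa [Nat.sub_add_cancel h1] using this
  exact reach_back_edge hPs hedge hin

include hPs hP in
lemma reach_down {j : ℕ} (h2 : j + 1 ≤ P.verts.length - 1)
    (h : Reach D Ps r v (pvert P r j, true)) :
    ∀ i, i ≤ j → Reach D Ps r v (pvert P r i, true) := by
  induction j with
  | zero => intro i hi; interval_cases i; exact h
  | succ j ih =>
    intro i hi
    rcases Nat.eq_or_lt_of_le hi with h' | h'
    · subst h'; exact h
    · have hprev := reach_step_down hPs hP (by omega) h2 h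
      simp only [Nat.add_sub_cancel] at hprev
      exact ih (by omega) hprev i (by omega)

end PerPath

/-- Part A: if `(v, in)` is not reachable, `Ps` admits a selection. -/
lemma sel_of_not_reach (hroot : IsRooted D r) (hv : v ≠ r) (hPs : IntDisjSystem D r v Ps)
    (hnr : ¬ Reach D Ps r v (v, false)) :
    ∃ sel : DiPath V → V ⊕ (V × V),
      (∀ P ∈ Ps, (∀ x, sel P = Sum.inl x → x ∈ P.internal) ∧
                (∀ e, sel P = Sum.inr e → e ∈ P.edges)) ∧
      ∀ Q : DiPath V, IsPath D r v Q →
        ∃ P ∈ Ps, (∀ x, sel P = Sum.inl x → x ∈ Q.vertexSet) ∧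
                 (∀ e, sel P = Sum.inr e → e ∈ Q.edges) := by
  classical
  set jstar : DiPath V → ℕ := fun P =>
    @Nat.findGreatest (fun j => Reach D Ps r v (pvert P r j, true))
      (Classical.decPred _) (P.verts.length - 2) with hjstar
  set sel : DiPath V → V ⊕ (V × V) := fun P =>
    if Reach D Ps r v (pvert P r (jstar P + 1), false) then Sum.inl (pvert P r (jstar P + 1))
    else Sum.inr (pvert P r (jstar P), pvert P r (jstar P + 1)) with hsel
  -- basic facts about jstar for P ∈ Ps
  have hlen2 : ∀ P ∈ Ps, 2 ≤ P.verts.length := fun P hP =>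
    (hPs.1 P hP).two_le_length (Ne.symm hv)
  have hj_spec : ∀ P ∈ Ps, Reach D Ps r v (pvert P r (jstar P), true) := by
    intro P hP
    have h0 : Reach D Ps r v (pvert P r 0, true) := by
      rw [pv_zero (hPs.1 P hP)]; exact reach_base
    exact @Nat.findGreatest_spec 0 (fun j => Reach D Ps r v (pvert P r j, true))
      (Classical.decPred _) (P.verts.length - 2) (Nat.zero_le _) h0
  have hj_le : ∀ P ∈ Ps, jstar P ≤ P.verts.length - 2 := fun P _ =>
    @Nat.findGreatest_le (fun j => Reach D Ps r v (pvert P r j, true))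
      (Classical.decPred _) (P.verts.length - 2)
  have hj_ge : ∀ P ∈ Ps, ∀ k ≤ P.verts.length - 2,
      Reach D Ps r v (pvert P r k, true) → k ≤ jstar P := fun P _ k hk h =>
    @Nat.le_findGreatest k (fun j => Reach D Ps r v (pvert P r j, true))
      (Classical.decPred _) (P.verts.length - 2) hk h
  refine ⟨sel, ?_, ?_⟩
  · -- validity of the selection
    intro P hP
    have hp := hPs.1 P hP
    have h2 := hlen2 P hP
    constructor
    · intro x hx
      by_cases hcond : Reach D Ps r v (pvert P r (jstar P + 1), false)
      · have hsp : sel P = Sum.inl (pvert P r (jstar P + 1)) := by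
          rw [hsel]; simp only [if_pos hcond]
        rw [hsp] at hx
        have hxeq := Sum.inl.inj hx
        subst hxeq
        have hne : jstar P + 1 ≠ P.verts.length - 1 := by
          intro heq
          rw [heq, pv_last hp] at hcond
          exact hnr hcond
        have := hj_le P hP
        exact pv_internal hp (by omega) (by omega)
      · have hsp : sel P = Sum.inr (pvert P r (jstar P), pvert P r (jstar P + 1)) := by
          rw [hsel]; simp only [if_neg hcond]
        rw [hsp] at hx
        exact nomatch hx
    · intro e he
      by_cases hcond : Reach D Ps r v (pvert P r (jstar P + 1), false)
      · have hsp : sel P = Sum.inl (pvert P r (jstar P + 1)) := by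
          rw [hsel]; simp only [if_pos hcond]
        rw [hsp] at he
        exact nomatch he
      · have hsp : sel P = Sum.inr (pvert P r (jstar P), pvert P r (jstar P + 1)) := by
          rw [hsel]; simp only [if_neg hcond]
        rw [hsp] at he
        have heq := Sum.inr.inj he
        subst heq
        have := hj_le P hP
        have := hlen2 P hP
        exact pv_edge hp (by omega)
  · -- the selection meets every r→v path Q
    intro Q hQ
    have hQ2 : 2 ≤ Q.verts.length := hQ.two_le_length (Ne.symm hv)
    set m := Q.verts.length - 1 with hm
    have hCm : ¬(Reach D Ps r v (pvert Q r ((m - 1) + 1), false) ∧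
        ((m - 1) + 1 = m ∨ Reach D Ps r v (pvert Q r ((m - 1) + 1), true))) := by
      rintro ⟨h1, -⟩
      have heq : (m - 1) + 1 = m := by omega
      rw [heq, hm, pv_last hQ] at h1
      exact hnr h1
    have hex : ∃ i, ¬(Reach D Ps r v (pvert Q r (i + 1), false) ∧
        (i + 1 = m ∨ Reach D Ps r v (pvert Q r (i + 1), true))) := ⟨m - 1, hCm⟩
    set i0 := Nat.find hex with hi0
    have hi0_spec := Nat.find_spec hex
    have hi0_min : ∀ i < i0, Reach D Ps r v (pvert Q r (i + 1), false) ∧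
        (i + 1 = m ∨ Reach D Ps r v (pvert Q r (i + 1), true)) := by
      intro i hi
      have hlt : i < Nat.find hex := by omega
      exact not_not.1 (Nat.find_min hex hlt)
    have hi0_le : i0 ≤ m - 1 := Nat.find_le hCm
    -- all vertices up to i0 are out-reachable
    have hout : ∀ i, i ≤ i0 → Reach D Ps r v (pvert Q r i, true) := by
      intro i
      induction i with
      | zero => intro _; rw [pv_zero hQ]; exact reach_base
      | succ i ih =>
        intro hi
        have hi' : i < i0 := by omega
        rcases (hi0_min i hi').2 with h | h
        · omega
        · exact h
    have houti0 := hout i0 le_rfl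
    by_cases hcaseA : Reach D Ps r v (pvert Q r (i0 + 1), false)
    · -- Case B : in-state reachable, but cannot continue out of it
      have hnotBC : ¬(i0 + 1 = m ∨ Reach D Ps r v (pvert Q r (i0 + 1), true)) :=
        fun h => hi0_spec ⟨hcaseA, h⟩
      push_neg at hnotBC
      obtain ⟨hm_ne, hno_out⟩ := hnotBC
      set u := pvert Q r (i0 + 1) with hu
      have hi1m : i0 + 1 < m := by omega
      have huv : u ≠ v := by
        intro huveq
        have hx : Q.verts[i0 + 1]'(by omega) = v := by
          rw [← pv_eq (by omega), ← hu]; exact huveq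
        have := hQ.index_of_v (by omega) hx
        omega
      have hUIu : u ∈ UInt Ps := by
        by_contra hUI
        exact hno_out (reach_split hUI huv hcaseA)
      rw [mem_UInt_iff] at hUIu
      obtain ⟨P, hP, hint⟩ := hUIu
      have hp := hPs.1 P hP
      rw [hp.mem_internal_iff] at hint
      obtain ⟨j, hjlen, hju, hj0, hjl⟩ := hint
      have hpu : pvert P r j = u := by rw [pv_eq hjlen]; exact hju
      have hj1 : 1 ≤ j := by omega
      have hj2 : j ≤ P.verts.length - 2 := by omega
      have hinu : Reach D Ps r v (pvert P r j, false) := by rw [hpu]; exact hcaseA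
      have hedge : (pvert P r (j - 1), pvert P r j) ∈ UEdges Ps := by
        rw [mem_UEdges_iff]
        refine ⟨P, hP, ?_⟩
        have := pv_edge hp (j := j - 1) (by omega)
        simpa [Nat.sub_add_cancel hj1] using this
      have hback := reach_back_edge hPs hedge hinu
      have hge : j - 1 ≤ jstar P := hj_ge P hP (j - 1) (by omega) hback
      have hjeq : jstar P = j - 1 := by
        by_contra hne
        have hle : j ≤ jstar P := by omega
        have hreach := reach_down hPs hP (j := jstar P)
          (by have := hj_le P hP; have := hlen2 P hP; omega) (hj_spec P hP) j hle
        rw [hpu] at hreach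
        exact hno_out hreach
      have hsucc : jstar P + 1 = j := by omega
      have hcondT : Reach D Ps r v (pvert P r (jstar P + 1), false) := by
        rw [hsucc, hpu]; exact hcaseA
      have hsp : sel P = Sum.inl (pvert P r (jstar P + 1)) := by
        rw [hsel]; simp only [if_pos hcondT]
      refine ⟨P, hP, ?_, ?_⟩
      · intro x hx
        rw [hsp] at hx
        have hxeq := Sum.inl.inj hx
        subst hxeq
        rw [hsucc, hpu, hu]
        rw [DiPath.mem_vertexSet_iff, List.mem_iff_getElem]
        exact ⟨i0 + 1, by omega, (pv_eq (by omega)).symm⟩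
      · intro e he
        rw [hsp] at he
        exact nomatch he
    · -- Case A : the edge (qv i0, qv (i0+1)) must be a used edge
      have hi0m : i0 + 1 < Q.verts.length := by omega
      have hedgeQ : (pvert Q r i0, pvert Q r (i0 + 1)) ∈ Q.edges := pv_edge hQ (by omega)
      have hD : (pvert Q r i0, pvert Q r (i0 + 1)) ∈ D := hQ.1 hedgeQ
      have hab : pvert Q r i0 ≠ pvert Q r (i0 + 1) := DiPath.edge_ne hedgeQ
      have hUE : (pvert Q r i0, pvert Q r (i0 + 1)) ∈ UEdges Ps := by
        by_contra hUE
        exact hcaseA (reach_fwd hD hUE hab houti0)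
      rw [mem_UEdges_iff] at hUE
      obtain ⟨P, hP, heP⟩ := hUE
      have hp := hPs.1 P hP
      rw [DiPath.mem_edges_iff] at heP
      obtain ⟨j, hj, ha, hb⟩ := heP
      have hpa : pvert P r j = pvert Q r i0 := by rw [pv_eq (by omega)]; exact ha
      have hpb : pvert P r (j + 1) = pvert Q r (i0 + 1) := by rw [pv_eq hj]; exact hb
      have hjle : j ≤ jstar P := hj_ge P hP j (by omega) (by rw [hpa]; exact houti0)
      have hjeq : jstar P = j := by
        by_contra hne
        have hlt : j < jstar P := by omega
        have hreach := reach_down hPs hP (j := jstar P)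
          (by have := hj_le P hP; have := hlen2 P hP; omega) (hj_spec P hP) (j + 1) (by omega)
        have hUIj : pvert P r (j + 1) ∈ UInt Ps := by
          rw [mem_UInt_iff]
          exact ⟨P, hP, pv_internal hp (by omega) (by have := hj_le P hP; omega)⟩
        have hin := reach_out_to_in hUIj hreach
        rw [hpb] at hin
        exact hcaseA hin
      have hcondF : ¬ Reach D Ps r v (pvert P r (jstar P + 1), false) := by
        rw [hjeq, hpb]; exact hcaseA
      have hsp : sel P = Sum.inr (pvert P r (jstar P), pvert P r (jstar P + 1)) := by
        rw [hsel]; simp only [if_neg hcondF]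
      refine ⟨P, hP, ?_, ?_⟩
      · intro x hx
        rw [hsp] at hx
        exact nomatch hx
      · intro e he
        rw [hsp] at he
        have heq := Sum.inr.inj he
        subst heq
        rw [hjeq, hpa, hpb]
        exact hedgeQ

end Residual

section Generic

/-- Edge set of a list of vertices. -/
def ledges (l : List V) : Set (V × V) := {e | e ∈ l.zip l.tail}

lemma DiPath.edges_eq_ledges (P : DiPath V) : P.edges = ledges P.verts := rfl

lemma mem_ledges_iff {l : List V} {a b : V} :
    (a, b) ∈ ledges l ↔ ∃ i, ∃ h : i + 1 < l.length, l[i] = a ∧ l[i + 1] = b := by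
  have hlen : (l.zip l.tail).length = l.length - 1 := by
    simp [List.length_zip, List.length_tail]
  constructor
  · intro h
    rw [ledges, Set.mem_setOf_eq, List.mem_iff_getElem] at h
    obtain ⟨i, hi, he⟩ := h
    have hi' : i + 1 < l.length := by omega
    refine ⟨i, hi', ?_, ?_⟩
    · have := List.getElem_zip (l := l) (l' := l.tail) (i := i) (h := hi)
      rw [this] at he
      exact congrArg Prod.fst he
    · have := List.getElem_zip (l := l) (l' := l.tail) (i := i) (h := hi)
      rw [this] at he
      have h2 := congrArg Prod.snd he
      simp only at h2
      rwa [List.getElem_tail] at h2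
  · rintro ⟨i, hi, ha, hb⟩
    rw [ledges, Set.mem_setOf_eq, List.mem_iff_getElem]
    refine ⟨i, by omega, ?_⟩
    rw [List.getElem_zip]
    have ht : l.tail[i]'(by simp [List.length_tail]; omega) = l[i + 1] :=
      List.getElem_tail _
    rw [ht, ha, hb]

lemma mem_ledges_cons {x y : V} {t : List V} {e : V × V} :
    e ∈ ledges (x :: y :: t) ↔ e = (x, y) ∨ e ∈ ledges (y :: t) := by
  simp [ledges, List.zip]

lemma ledges_head {x y : V} {t : List V} : (x, y) ∈ ledges (x :: y :: t) :=
  mem_ledges_cons.2 (Or.inl rfl)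

lemma mem_ledges_reverse_aux {l : List V} {a b : V}
    (h : (a, b) ∈ ledges l.reverse) : (b, a) ∈ ledges l := by
  rw [mem_ledges_iff] at h ⊢
  obtain ⟨i, hi, ha, hb⟩ := h
  rw [List.length_reverse] at hi
  refine ⟨l.length - 2 - i, by omega, ?_, ?_⟩
  · have hb' : l[l.length - 1 - (i + 1)]'(by omega) = b := by
      rw [← List.getElem_reverse]; exact hb
    rw [DiPath.getElem_idx_eq l (show l.length - 2 - i = l.length - 1 - (i + 1) by omega)]
    exact hb'
  · have ha' : l[l.length - 1 - i]'(by omega) = a := by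
      rw [← List.getElem_reverse]; exact ha
    rw [DiPath.getElem_idx_eq l (show l.length - 2 - i + 1 = l.length - 1 - i by omega)]
    exact ha'

lemma mem_ledges_reverse {l : List V} {a b : V} :
    (a, b) ∈ ledges l.reverse ↔ (b, a) ∈ ledges l := by
  constructor
  · exact mem_ledges_reverse_aux
  · intro h
    have := mem_ledges_reverse_aux (l := l.reverse) (a := b) (b := a)
      (by rwa [List.reverse_reverse])
    exact this

lemma head_reverse' {l : List V} (h : l ≠ []) :
    l.reverse.head (by simpa using h) = l.getLast h := by
  rw [List.head_eq_getElem, List.getLast_eq_getElem, List.getElem_reverse]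
  exact DiPath.getElem_idx_eq l (by omega) _

lemma getLast_reverse' {l : List V} (h : l ≠ []) :
    l.reverse.getLast (by simpa using h) = l.head h := by
  rw [List.head_eq_getElem, List.getLast_eq_getElem, List.getElem_reverse]
  apply DiPath.getElem_idx_eq l (by rw [List.length_reverse]; omega)

/-- Out-determinism: two chains in `G` from the same vertex to the sink `z`
(avoiding `bad`, where `z` has no outgoing edge and out-neighbours are unique
away from `bad`) coincide. -/
lemma chain_unique {G : Set (V × V)} {z bad : V}
    (hstop : ∀ b, (z, b) ∉ G)
    (huniq : ∀ a b b', a ≠ bad → (a, b) ∈ G → (a, b') ∈ G → b = b') :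
    ∀ (l₁ l₂ : List V) (h₁ : l₁ ≠ []) (h₂ : l₂ ≠ []),
      l₁.head h₁ = l₂.head h₂ → l₁.getLast h₁ = z → l₂.getLast h₂ = z →
      ledges l₁ ⊆ G → ledges l₂ ⊆ G → bad ∉ l₁ → l₁ = l₂ := by
  intro l₁
  induction l₁ with
  | nil => intro l₂ h₁; exact absurd rfl h₁
  | cons x t₁ ih =>
    intro l₂ h₁ h₂ hhead hlast₁ hlast₂ hG₁ hG₂ hbad
    cases l₂ with
    | nil => exact absurd rfl h₂
    | cons y t₂ =>
      have hxy : x = y := by simpa using hhead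
      subst hxy
      cases t₁ with
      | nil =>
        have hxz : x = z := by simpa using hlast₁
        cases t₂ with
        | nil => rfl
        | cons c₂ t₂' =>
          exfalso
          have hmem : (x, c₂) ∈ G := hG₂ ledges_head
          exact hstop c₂ (hxz ▸ hmem)
      | cons c₁ t₁' =>
        cases t₂ with
        | nil =>
          exfalso
          have hxz : x = z := by simpa using hlast₂
          have hmem : (x, c₁) ∈ G := hG₁ ledges_head
          exact hstop c₁ (hxz ▸ hmem)
        | cons c₂ t₂' =>
          have hxbad : x ≠ bad := fun h => hbad (h ▸ List.mem_cons_self (a := x))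
          have hc : c₁ = c₂ := huniq x c₁ c₂ hxbad (hG₁ ledges_head) (hG₂ ledges_head)
          subst hc
          have htail : c₁ :: t₁' = c₁ :: t₂' := by
            refine ih (c₁ :: t₂') (by simp) (by simp) rfl ?_ ?_ ?_ ?_ ?_
            · rw [← hlast₁]; exact (List.getLast_cons (by simp)).symm
            · rw [← hlast₂]; exact (List.getLast_cons (by simp)).symm
            · exact fun e he => hG₁ (mem_ledges_cons.2 (Or.inr he))
            · exact fun e he => hG₂ (mem_ledges_cons.2 (Or.inr he))
            · exact fun h => hbad (List.mem_cons_of_mem x h)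
          rw [htail]

/-- In-determinism version, by reversing. -/
lemma chain_unique' {G : Set (V × V)} {z bad : V}
    (hstop : ∀ a, (a, z) ∉ G)
    (huniq : ∀ a a' u, u ≠ bad → (a, u) ∈ G → (a', u) ∈ G → a = a') :
    ∀ (l₁ l₂ : List V) (h₁ : l₁ ≠ []) (h₂ : l₂ ≠ []),
      l₁.getLast h₁ = l₂.getLast h₂ → l₁.head h₁ = z → l₂.head h₂ = z →
      ledges l₁ ⊆ G → ledges l₂ ⊆ G → bad ∉ l₁ → l₁ = l₂ := by
  intro l₁ l₂ h₁ h₂ hlast hhead₁ hhead₂ hG₁ hG₂ hbad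
  have hrev := chain_unique (G := {p : V × V | (p.2, p.1) ∈ G}) (z := z) (bad := bad)
    (fun b hb => hstop b hb)
    (fun a b b' ha h1 h2 => huniq b b' a ha h1 h2)
    l₁.reverse l₂.reverse (by simpa using h₁) (by simpa using h₂)
    (by rw [head_reverse' h₁, head_reverse' h₂]; exact hlast)
    (by rw [getLast_reverse' h₁]; exact hhead₁)
    (by rw [getLast_reverse' h₂]; exact hhead₂)
    (fun e he => hG₁ (mem_ledges_reverse_aux he))
    (fun e he => hG₂ (mem_ledges_reverse_aux he))
    (by rwa [List.mem_reverse])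
  exact List.reverse_injective hrev

end Generic

section FunctionalGraph
variable {F : Set (V × V)} {r v : V}

/-- Two `r→v` paths in a "functional" digraph sharing an inner vertex are equal. -/
lemma f_paths_disjoint (hvr : v ≠ r)
    (hnoutv : ∀ b, (v, b) ∉ F) (hninr : ∀ a, (a, r) ∉ F)
    (hout : ∀ u b b', u ≠ r → (u, b) ∈ F → (u, b') ∈ F → b = b')
    (hin : ∀ a a' u, u ≠ v → (a, u) ∈ F → (a', u) ∈ F → a = a')
    {P Q : DiPath V} (hP : IsPath F r v P) (hQ : IsPath F r v Q) {x : V}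
    (hxP : x ∈ P.vertexSet) (hxQ : x ∈ Q.vertexSet) (hxr : x ≠ r) (hxv : x ≠ v) :
    P = Q := by
  rw [DiPath.mem_vertexSet_iff, List.mem_iff_getElem] at hxP hxQ
  obtain ⟨i, hi, hxi⟩ := hxP
  obtain ⟨j, hj, hxj⟩ := hxQ
  have hi0 : i ≠ 0 := fun h => hxr
    (by rw [← hxi, DiPath.getElem_idx_eq _ h]; exact hP.getElem_zero)
  have hil : i ≠ P.verts.length - 1 := fun h => hxv
    (by rw [← hxi, DiPath.getElem_idx_eq _ h]; exact hP.getElem_last)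
  have hj0 : j ≠ 0 := fun h => hxr
    (by rw [← hxj, DiPath.getElem_idx_eq _ h]; exact hQ.getElem_zero)
  have hjl : j ≠ Q.verts.length - 1 := fun h => hxv
    (by rw [← hxj, DiPath.getElem_idx_eq _ h]; exact hQ.getElem_last)
  have hPne : P.verts.drop i ≠ [] := by
    rw [← List.length_pos_iff, List.length_drop]; omega
  have hQne : Q.verts.drop j ≠ [] := by
    rw [← List.length_pos_iff, List.length_drop]; omega
  have hPtne : P.verts.take (i + 1) ≠ [] := by
    rw [← List.length_pos_iff, List.length_take]; omega
  have hQtne : Q.verts.take (j + 1) ≠ [] := by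
    rw [← List.length_pos_iff, List.length_take]; omega
  -- auxiliary facts about drops
  have hdrop_edges : ∀ (R : DiPath V) (k : ℕ), IsPath F r v R → ledges (R.verts.drop k) ⊆ F := by
    rintro R k hR ⟨a, b⟩ hab
    rw [mem_ledges_iff] at hab
    obtain ⟨m, hm, ha, hb⟩ := hab
    rw [List.length_drop] at hm
    rw [List.getElem_drop] at ha hb
    apply hR.1
    rw [DiPath.mem_edges_iff]
    refine ⟨k + m, by omega, ha, ?_⟩
    rw [DiPath.getElem_idx_eq _ (show k + m + 1 = k + (m + 1) by omega)]
    exact hb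
  have htake_edges : ∀ (R : DiPath V) (k : ℕ), IsPath F r v R → ledges (R.verts.take k) ⊆ F := by
    rintro R k hR ⟨a, b⟩ hab
    rw [mem_ledges_iff] at hab
    obtain ⟨m, hm, ha, hb⟩ := hab
    rw [List.length_take] at hm
    rw [List.getElem_take] at ha hb
    apply hR.1
    rw [DiPath.mem_edges_iff]
    exact ⟨m, by omega, ha, hb⟩
  -- suffixes agree
  have hdrop : P.verts.drop i = Q.verts.drop j := by
    refine chain_unique (G := F) (z := v) (bad := r) hnoutv
      (fun a b b' => hout a b b') _ _ hPne hQne ?_ ?_ ?_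
      (hdrop_edges P i hP) (hdrop_edges Q j hQ) ?_
    · rw [List.head_eq_getElem, List.head_eq_getElem, List.getElem_drop, List.getElem_drop]
      rw [DiPath.getElem_idx_eq _ (show i + 0 = i by omega),
        DiPath.getElem_idx_eq _ (show j + 0 = j by omega)]
      rw [hxi, hxj]
    · rw [List.getLast_eq_getElem, List.getElem_drop]
      rw [DiPath.getElem_idx_eq _
        (show i + ((P.verts.drop i).length - 1) = P.verts.length - 1 by
          rw [List.length_drop]; omega)]
      exact hP.getElem_last
    · rw [List.getLast_eq_getElem, List.getElem_drop]
      rw [DiPath.getElem_idx_eq _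
        (show j + ((Q.verts.drop j).length - 1) = Q.verts.length - 1 by
          rw [List.length_drop]; omega)]
      exact hQ.getElem_last
    · intro hr
      rw [List.mem_iff_getElem] at hr
      obtain ⟨k, hk, hkr⟩ := hr
      rw [List.getElem_drop] at hkr
      have := hP.index_of_r (by rw [List.length_drop] at hk; omega) hkr
      omega
  -- prefixes agree
  have htake : P.verts.take (i + 1) = Q.verts.take (j + 1) := by
    refine chain_unique' (G := F) (z := r) (bad := v) hninr
      (fun a a' u => hin a a' u) _ _ hPtne hQtne ?_ ?_ ?_
      (htake_edges P (i + 1) hP) (htake_edges Q (j + 1) hQ) ?_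
    · rw [List.getLast_eq_getElem, List.getLast_eq_getElem, List.getElem_take, List.getElem_take]
      rw [DiPath.getElem_idx_eq _
        (show (P.verts.take (i + 1)).length - 1 = i by rw [List.length_take]; omega),
        DiPath.getElem_idx_eq _
        (show (Q.verts.take (j + 1)).length - 1 = j by rw [List.length_take]; omega)]
      rw [hxi, hxj]
    · rw [List.head_eq_getElem, List.getElem_take]
      exact hP.getElem_zero
    · rw [List.head_eq_getElem, List.getElem_take]
      exact hQ.getElem_zero
    · intro hvmem
      rw [List.mem_iff_getElem] at hvmem
      obtain ⟨k, hk, hkv⟩ := hvmem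
      rw [List.getElem_take] at hkv
      rw [List.length_take] at hk
      have := hP.index_of_v (by omega) hkv
      omega
  have hij : i = j := by
    have hlen := congrArg List.length htake
    rw [List.length_take, List.length_take] at hlen
    omega
  subst hij
  have h5 : P.verts.take i = Q.verts.take i := by
    have := congrArg (List.take i) htake
    rwa [List.take_take, List.take_take, min_eq_left (by omega)] at this
  apply DiPath.ext'
  calc P.verts = P.verts.take i ++ P.verts.drop i := (List.take_append_drop i _).symm
    _ = Q.verts.take i ++ Q.verts.drop i := by rw [h5, hdrop]
    _ = Q.verts := List.take_append_drop i _

/-- The set of all `r→v` paths of a functional digraph is an internally disjoint system. -/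
lemma f_system {D : Set (V × V)} (hvr : v ≠ r) (hFD : F ⊆ D)
    (hnoutv : ∀ b, (v, b) ∉ F) (hninr : ∀ a, (a, r) ∉ F)
    (hout : ∀ u b b', u ≠ r → (u, b) ∈ F → (u, b') ∈ F → b = b')
    (hin : ∀ a a' u, u ≠ v → (a, u) ∈ F → (a', u) ∈ F → a = a') :
    IntDisjSystem D r v {Q : DiPath V | IsPath F r v Q} := by
  constructor
  · intro Q hQ
    exact ⟨fun e he => hFD (hQ.1 he), hQ.2.1, hQ.2.2⟩
  · intro P hP Q hQ hne
    apply Set.eq_of_subset_of_subset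
    · rintro x ⟨hxP, hxQ⟩
      by_contra hx
      simp only [Set.mem_insert_iff, Set.mem_singleton_iff, not_or] at hx
      exact hne (f_paths_disjoint hvr hnoutv hninr hout hin hP hQ hxP hxQ hx.1 hx.2)
    · rintro x (rfl | rfl)
      · exact ⟨hP.r_mem, hQ.r_mem⟩
      · exact ⟨hP.v_mem, hQ.v_mem⟩

/-- Existence of a trail: following the functional graph from a
start-neighbour `b0` of `r` inside a finite closed region reaches `v`. -/
lemma trail_exists {b0 : V} {S : Set V} (hvr : v ≠ r) (hb0r : b0 ≠ r)
    (hninr : ∀ a, (a, r) ∉ F)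
    (hin : ∀ a a' u, u ≠ v → (a, u) ∈ F → (a', u) ∈ F → a = a')
    (hflow : ∀ u a, u ≠ r → u ≠ v → (a, u) ∈ F → ∃ b, (u, b) ∈ F)
    (hstart : (r, b0) ∈ F)
    (hSfin : S.Finite) (hb0S : b0 ∈ S)
    (hclose : ∀ x y, x ∈ S → x ≠ v → x ≠ r → (x, y) ∈ F → y ∈ S) :
    ∃ Q : DiPath V, IsPath F r v Q ∧ ∃ h : 1 < Q.verts.length, Q.verts[1] = b0 := by
  classical
  set g : V → V := fun u => if h : ∃ c, (u, c) ∈ F then h.choose else u with hg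
  set it : ℕ → V := fun k => g^[k] b0 with hit
  have hit0 : it 0 = b0 := rfl
  have hitsucc : ∀ k, it (k + 1) = g (it k) := fun k => Function.iterate_succ_apply' g k b0
  have hgspec : ∀ u, (∃ c, (u, c) ∈ F) → (u, g u) ∈ F := by
    intro u hu
    rw [hg]
    simp only [dif_pos hu]
    exact hu.choose_spec
  -- master lemma: edges of the iteration & iterates avoid r
  have master : ∀ k, (∀ j < k, it j ≠ v) → ∀ j < k, (it j, it (j + 1)) ∈ F ∧ it j ≠ r := by
    intro k
    induction k with
    | zero => intro _ j hj; omega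
    | succ k ih =>
      intro hgood j hj
      rcases Nat.lt_or_ge j k with h' | h'
      · exact ih (fun j hj => hgood j (by omega)) j h'
      · have hjk : j = k := by omega
        subst hjk
        have hinj : ∃ a, (a, it j) ∈ F := by
          rcases Nat.eq_zero_or_pos j with h0 | h0
          · subst h0; exact ⟨r, hstart⟩
          · have := ih (fun m hm => hgood m (by omega)) (j - 1) (by omega)
            refine ⟨it (j - 1), ?_⟩
            have heq : j - 1 + 1 = j := by omega
            rw [← heq]
            exact this.1
        have hner : it j ≠ r := by
          rcases Nat.eq_zero_or_pos j with h0 | h0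
          · subst h0; exact hb0r
          · intro hr
            obtain ⟨a, ha⟩ := hinj
            rw [hr] at ha
            exact hninr a ha
        have hnev : it j ≠ v := hgood j (by omega)
        obtain ⟨a, ha⟩ := hinj
        obtain ⟨b, hb⟩ := hflow (it j) a hner hnev ha
        refine ⟨?_, hner⟩
        rw [hitsucc]
        exact hgspec (it j) ⟨b, hb⟩
  -- injectivity of the iteration (while v is not reached)
  have hinj : ∀ k, (∀ j < k, it j ≠ v) → ∀ i, ∀ j, i < j → j ≤ k → it i ≠ it j := by
    intro k hgood i
    induction i with
    | zero =>
      intro j hij hjk heq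
      have hedge : (it (j - 1), it j) ∈ F := by
        have := (master k hgood (j - 1) (by omega)).1
        have heq' : j - 1 + 1 = j := by omega
        rwa [heq'] at this
      have hb0v : it 0 ≠ v := hgood 0 (by omega)
      rw [← heq] at hedge
      have := hin (it (j - 1)) r (it 0) hb0v hedge (hit0 ▸ hstart)
      rcases Nat.eq_zero_or_pos (j - 1) with h0 | h0
      · rw [h0, hit0] at this
        exact hb0r this
      · exact (master k hgood (j - 1) (by omega)).2 this
    | succ i ih =>
      intro j hij hjk heq
      have he1 : (it i, it (i + 1)) ∈ F := (master k hgood i (by omega)).1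
      have he2 : (it (j - 1), it j) ∈ F := by
        have := (master k hgood (j - 1) (by omega)).1
        have heq' : j - 1 + 1 = j := by omega
        rwa [heq'] at this
      have hnev : it (i + 1) ≠ v := hgood (i + 1) (by omega)
      rw [← heq] at he2
      have := hin (it (j - 1)) (it i) (it (i + 1)) hnev he2 he1
      exact ih (j - 1) (by omega) (by omega) this.symm
  -- iterates remain in S
  have hmemS : ∀ k, (∀ j < k, it j ≠ v) → ∀ j ≤ k, it j ∈ S := by
    intro k hgood j
    induction j with
    | zero => intro _; rw [hit0]; exact hb0S
    | succ j ih =>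
      intro hjk
      have hj : j < k := by omega
      have hedge := (master k hgood j hj).1
      exact hclose (it j) (it (j + 1)) (ih (by omega)) (hgood j hj) (master k hgood j hj).2 hedge
  -- termination
  have hterm : ∃ k, it k = v := by
    by_contra hno
    push_neg at hno
    have hgood : ∀ k, ∀ j, j < k → it j ≠ v := fun k j _ => hno j
    have hitinj : Function.Injective it := by
      intro i j hij
      by_contra hne
      rcases Nat.lt_or_ge i j with h | h
      · exact hinj j (hgood j) i j h le_rfl hij
      · have h' : j < i := by omega
        exact hinj i (hgood i) j i h' le_rfl hij.symm
    exact (Set.infinite_of_injective_forall_mem hitinj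
      (fun j => hmemS j (hgood j) j le_rfl)) hSfin
  -- construct the path
  set K := Nat.find hterm with hKdef
  have hKv : it K = v := Nat.find_spec hterm
  have hgoodK : ∀ j < K, it j ≠ v := fun j hj => Nat.find_min hterm hj
  set verts : List V := r :: (List.range (K + 1)).map it with hverts
  have hlen : verts.length = K + 2 := by simp [hverts]
  have hget : ∀ k, k < K + 1 → ∀ (h : k + 1 < verts.length), verts[k + 1]'h = it k := by
    intro k hk h
    simp only [hverts, List.getElem_cons_succ, List.getElem_map, List.getElem_range]
  have hget0 : ∀ (h : 0 < verts.length), verts[0]'h = r := fun _ => rfl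
  have hitner : ∀ j, j ≤ K → it j ≠ r := by
    intro j hj
    rcases Nat.lt_or_ge j K with h | h
    · exact (master K hgoodK j h).2
    · have hjK : j = K := by omega
      rw [hjK, hKv]
      exact hvr
  have hnodup : verts.Nodup := by
    rw [hverts, List.nodup_cons]
    constructor
    · intro hmem
      rw [List.mem_map] at hmem
      obtain ⟨j, hj, hjr⟩ := hmem
      rw [List.mem_range] at hj
      exact hitner j (by omega) hjr
    · refine List.Nodup.map_on ?_ List.nodup_range
      intro a ha b hb hab
      rw [List.mem_range] at ha hb
      by_contra hne
      rcases Nat.lt_or_ge a b with h | h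
      · exact hinj K hgoodK a b h (by omega) hab
      · exact hinj K hgoodK b a (by omega) (by omega) hab.symm
  have hne' : verts ≠ [] := by rw [hverts]; simp
  refine ⟨⟨verts, hne', hnodup⟩, ⟨?_, ?_, ?_⟩, ?_⟩
  · rintro ⟨a, b⟩ he
    rw [DiPath.mem_edges_iff] at he
    obtain ⟨k, hk, ha, hb⟩ := he
    simp only at ha hb
    rcases Nat.eq_zero_or_pos k with h0 | h0
    · subst h0
      have haa : a = r := by rw [← ha]; rfl
      have hbb : b = b0 := by
        rw [← hb, hget 0 (by omega)]
        exact hit0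
      rw [haa, hbb]
      exact hstart
    · have hk2 : k - 1 + 1 = k := by omega
      have hkK : k - 1 < K := by rw [hlen] at hk; omega
      have haa : a = it (k - 1) := by
        rw [← ha, ← hget (k - 1) (by omega) (by omega)]
        exact (DiPath.getElem_idx_eq verts (by omega) _).symm
      have hbb : b = it (k - 1 + 1) := by
        rw [← hb, ← hget (k - 1 + 1) (by omega) (by omega)]
        exact (DiPath.getElem_idx_eq verts (by omega) _).symm
      rw [haa, hbb]
      exact (master K hgoodK (k - 1) hkK).1
  · show DiPath.first _ = r
    rw [DiPath.first_eq]
    rfl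
  · show DiPath.last _ = v
    rw [DiPath.last_eq]
    show verts[verts.length - 1]'(by omega) = v
    rw [DiPath.getElem_idx_eq verts (show verts.length - 1 = K + 1 by omega)]
    rw [hget K (by omega)]
    exact hKv
  · refine ⟨by show 1 < verts.length; omega, ?_⟩
    show verts[1] = b0
    rw [hget 0 (by omega)]
    exact hit0

end FunctionalGraph

section Walks

lemma pair_eq_fst {α β : Type*} {x y : α} {b c : β} (h : (x, b) = (y, c)) : x = y :=
  (Prod.ext_iff.1 h).1

lemma pair_eq_snd {α β : Type*} {x y : α} {b c : β} (h : (x, b) = (y, c)) : b = c :=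
  (Prod.ext_iff.1 h).2

lemma exists_nodup_chain_fn {α : Type*} {R : α → α → Prop} {a b : α}
    (h : Relation.ReflTransGen R a b) :
    ∃ (w : ℕ → α) (L : ℕ), w 0 = a ∧ w L = b ∧ (∀ i < L, R (w i) (w (i + 1))) ∧
      (∀ i ≤ L, ∀ j ≤ L, w i = w j → i = j) := by
  classical
  induction h with
  | refl => exact ⟨fun _ => a, 0, rfl, rfl, by omega, fun i hi j hj _ => by omega⟩
  | @tail b' c hab hbc ih =>
    obtain ⟨w, L, h0, hL, hstep, hinj⟩ := ih
    by_cases hc : ∃ i, i ≤ L ∧ w i = c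
    · obtain ⟨i, hiL, hic⟩ := hc
      exact ⟨w, i, h0, hic, fun j hj => hstep j (by omega),
        fun i' hi' j' hj' => hinj i' (by omega) j' (by omega)⟩
    · push_neg at hc
      refine ⟨fun i => if i ≤ L then w i else c, L + 1,
        by simp only [if_pos (Nat.zero_le L)]; exact h0,
        by simp only [if_neg (by omega : ¬ L + 1 ≤ L)], ?_, ?_⟩
      · intro i hi
        by_cases hiL : i + 1 ≤ L
        · simp only [if_pos (by omega : i ≤ L), if_pos hiL]
          exact hstep i (by omega)
        · have hiL' : i = L := by omega
          subst hiL'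
          simp only [if_pos (le_refl i), if_neg (by omega : ¬ i + 1 ≤ i)]
          rw [hL]
          exact hbc
      · intro i hi j hj heq
        by_cases hiL : i ≤ L <;> by_cases hjL : j ≤ L
        · simp only [if_pos hiL, if_pos hjL] at heq
          exact hinj i hiL j hjL heq
        · simp only [if_pos hiL, if_neg hjL] at heq
          exact absurd heq (hc i hiL)
        · simp only [if_neg hiL, if_pos hjL] at heq
          exact absurd heq.symm (hc j hjL)
        · omega

variable {D : Set (V × V)} {r v : V} {Ps : Set (DiPath V)}

lemma step_src_out {a : V} {t : V × Bool} (h : Step D Ps v (a, true) t) :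
    ∃ b, t = (b, false) ∧
      ((a ≠ b ∧ (a, b) ∈ D ∧ (a, b) ∉ UEdges Ps) ∨ (a = b ∧ a ∈ UInt Ps)) := by
  rcases h with ⟨a', b', hne, hs, ht, hD, hUE⟩ | ⟨a', b', hne, hs, ht, hUE⟩ |
    ⟨u, hs, ht, hUI, huv⟩ | ⟨u, hs, ht, hUI⟩
  · have haa : a = a' := pair_eq_fst hs
    subst haa
    exact ⟨b', ht, Or.inl ⟨hne, hD, hUE⟩⟩
  · exact absurd (pair_eq_snd hs) (by simp)
  · exact absurd (pair_eq_snd hs) (by simp)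
  · have haa : a = u := pair_eq_fst hs
    subst haa
    exact ⟨a, ht, Or.inr ⟨rfl, hUI⟩⟩

lemma step_src_in {u : V} {t : V × Bool} (h : Step D Ps v (u, false) t) :
    ∃ c, t = (c, true) ∧
      ((c ≠ u ∧ (c, u) ∈ UEdges Ps) ∨ (c = u ∧ u ∉ UInt Ps ∧ u ≠ v)) := by
  rcases h with ⟨a', b', hne, hs, ht, hD, hUE⟩ | ⟨a', b', hne, hs, ht, hUE⟩ |
    ⟨u', hs, ht, hUI, huv⟩ | ⟨u', hs, ht, hUI⟩
  · exact absurd (pair_eq_snd hs) (by simp)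
  · have hub : u = b' := pair_eq_fst hs
    subst hub
    exact ⟨a', ht, Or.inl ⟨hne, hUE⟩⟩
  · have huu : u = u' := pair_eq_fst hs
    subst huu
    exact ⟨u, ht, Or.inr ⟨rfl, hUI, huv⟩⟩
  · exact absurd (pair_eq_snd hs) (by simp)

lemma step_tgt_in {b : V} {s : V × Bool} (h : Step D Ps v s (b, false)) :
    ∃ a, s = (a, true) ∧
      ((a ≠ b ∧ (a, b) ∈ D ∧ (a, b) ∉ UEdges Ps) ∨ (a = b ∧ b ∈ UInt Ps)) := by
  rcases h with ⟨a', b', hne, hs, ht, hD, hUE⟩ | ⟨a', b', hne, hs, ht, hUE⟩ |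
    ⟨u', hs, ht, hUI, huv⟩ | ⟨u', hs, ht, hUI⟩
  · have hbb : b = b' := pair_eq_fst ht
    subst hbb
    exact ⟨a', hs, Or.inl ⟨hne, hD, hUE⟩⟩
  · exact absurd (pair_eq_snd ht) (by simp)
  · exact absurd (pair_eq_snd ht) (by simp)
  · have hbb : b = u' := pair_eq_fst ht
    subst hbb
    exact ⟨b, hs, Or.inr ⟨rfl, hUI⟩⟩

lemma step_tgt_out {c : V} {s : V × Bool} (h : Step D Ps v s (c, true)) :
    ∃ u, s = (u, false) ∧
      ((c ≠ u ∧ (c, u) ∈ UEdges Ps) ∨ (c = u ∧ u ∉ UInt Ps ∧ u ≠ v)) := by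
  rcases h with ⟨a', b', hne, hs, ht, hD, hUE⟩ | ⟨a', b', hne, hs, ht, hUE⟩ |
    ⟨u', hs, ht, hUI, huv⟩ | ⟨u', hs, ht, hUI⟩
  · exact absurd (pair_eq_snd ht) (by simp)
  · have hca : c = a' := pair_eq_fst ht
    subst hca
    exact ⟨b', hs, Or.inl ⟨hne, hUE⟩⟩
  · have hcu : c = u' := pair_eq_fst ht
    subst hcu
    exact ⟨c, hs, Or.inr ⟨rfl, hUI, huv⟩⟩
  · exact absurd (pair_eq_snd ht) (by simp)

/-- The new (forward) edges of the walk. -/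
def WFs (w : ℕ → V × Bool) (L : ℕ) : Set (V × V) :=
  {e | e.1 ≠ e.2 ∧ ∃ i, i < L ∧ w i = (e.1, true) ∧ w (i + 1) = (e.2, false)}

/-- The removed (backward) edges of the walk. -/
def RBs (w : ℕ → V × Bool) (L : ℕ) : Set (V × V) :=
  {e | e.1 ≠ e.2 ∧ ∃ i, i < L ∧ w i = (e.2, false) ∧ w (i + 1) = (e.1, true)}

/-- The augmented edge set. -/
def Fs (Ps : Set (DiPath V)) (w : ℕ → V × Bool) (L : ℕ) : Set (V × V) :=
  (UEdges Ps \ RBs w L) ∪ WFs w L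

section WalkFacts
variable {w : ℕ → V × Bool} {L : ℕ}
  (hroot : IsRooted D r) (hv : v ≠ r) (hPs : IntDisjSystem D r v Ps)
  (hw0 : w 0 = (r, true)) (hwL : w L = (v, false))
  (hstep : ∀ i < L, Step D Ps v (w i) (w (i + 1)))
  (hinj : ∀ i ≤ L, ∀ j ≤ L, w i = w j → i = j)

include hv hw0 hwL in
lemma walk_L_pos : 1 ≤ L := by
  by_contra h
  have hL0 : L = 0 := by omega
  rw [hL0, hw0] at hwL
  exact Bool.noConfusion (pair_eq_snd hwL)

include hroot hv hPs hw0 hwL hstep hinj in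
lemma walk_no_vtrue : ∀ i ≤ L, w i ≠ (v, true) := by
  intro i hi heq
  have hi0 : i ≠ 0 := by
    intro h
    rw [h, hw0] at heq
    exact hv (pair_eq_fst heq).symm
  have hs := hstep (i - 1) (by omega)
  rw [show i - 1 + 1 = i by omega, heq] at hs
  obtain ⟨u', hu', hcase⟩ := step_tgt_out hs
  rcases hcase with ⟨-, hUE⟩ | ⟨heqc, -, hvv⟩
  · exact ue_no_out_v hPs hUE
  · exact hvv heqc.symm

include hroot hv hPs hw0 hwL hstep hinj in
lemma walk_first_arc : ∃ b1, b1 ≠ r ∧ w 1 = (b1, false) ∧ (r, b1) ∈ D ∧ (r, b1) ∉ UEdges Ps := by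
  have hs := hstep 0 (by have := walk_L_pos hv hw0 hwL; omega)
  rw [hw0] at hs
  obtain ⟨b, hb, hcase⟩ := step_src_out hs
  rcases hcase with ⟨hne, hD, hUE⟩ | ⟨-, hUI⟩
  · exact ⟨b, Ne.symm hne, hb, hD, hUE⟩
  · exact absurd hUI (ui_not_r hPs)

include hstep in
lemma wfs_sub {a b : V} (h : (a, b) ∈ WFs w L) : (a, b) ∈ D ∧ (a, b) ∉ UEdges Ps := by
  obtain ⟨hne, i, hiL, hw1, hw2⟩ := h
  have hs := hstep i hiL
  rw [hw1, hw2] at hs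
  obtain ⟨b', hb', hcase⟩ := step_src_out hs
  have hbb : b = b' := pair_eq_fst hb'
  subst hbb
  rcases hcase with ⟨-, hD, hUE⟩ | ⟨heq, -⟩
  · exact ⟨hD, hUE⟩
  · exact absurd heq hne

include hstep in
lemma rbs_sub {a b : V} (h : (a, b) ∈ RBs w L) : (a, b) ∈ UEdges Ps := by
  obtain ⟨hne, i, hiL, hw1, hw2⟩ := h
  have hs := hstep i hiL
  rw [hw1, hw2] at hs
  obtain ⟨c, hc, hcase⟩ := step_src_in hs
  have hca : a = c := pair_eq_fst hc
  subst hca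
  rcases hcase with ⟨-, hUE⟩ | ⟨heq, -, -⟩
  · exact hUE
  · exact absurd heq hne

include hinj in
lemma wfs_in_unique {a a' b : V} (h : (a, b) ∈ WFs w L) (h' : (a', b) ∈ WFs w L) : a = a' := by
  obtain ⟨-, i, hiL, hw1, hw2⟩ := h
  obtain ⟨-, j, hjL, hw1', hw2'⟩ := h'
  have hij : i + 1 = j + 1 := hinj (i + 1) (by omega) (j + 1) (by omega) (by rw [hw2, hw2'])
  have hii : i = j := by omega
  subst hii
  rw [hw1] at hw1'
  exact pair_eq_fst hw1'

include hinj in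
lemma wfs_out_unique {a b b' : V} (h : (a, b) ∈ WFs w L) (h' : (a, b') ∈ WFs w L) : b = b' := by
  obtain ⟨-, i, hiL, hw1, hw2⟩ := h
  obtain ⟨-, j, hjL, hw1', hw2'⟩ := h'
  have hij : i = j := hinj i (by omega) j (by omega) (by rw [hw1, hw1'])
  subst hij
  rw [hw2] at hw2'
  exact pair_eq_fst hw2'

include hw0 hinj in
lemma no_rbs_from_r {b : V} : (r, b) ∉ RBs w L := by
  rintro ⟨hne, i, hiL, hw1, hw2⟩
  have : i + 1 = 0 := hinj (i + 1) (by omega) 0 (by omega) (by rw [hw2, hw0])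
  omega

include hwL hinj in
lemma no_rbs_to_v {a : V} : (a, v) ∉ RBs w L := by
  rintro ⟨hne, i, hiL, hw1, hw2⟩
  have : i = L := hinj i (by omega) L le_rfl (by rw [hw1, hwL])
  omega

include hroot hv hPs hw0 hwL hstep hinj in
lemma no_wfs_from_v {b : V} : (v, b) ∉ WFs w L := by
  rintro ⟨hne, i, hiL, hw1, hw2⟩
  exact walk_no_vtrue hroot hv hPs hw0 hwL hstep hinj i (by omega) hw1

include hroot hPs hstep in
lemma fs_sub_D : Fs Ps w L ⊆ D := by
  rintro ⟨a, b⟩ (⟨hUE, -⟩ | hWF)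
  · exact UEdges_subset hPs hUE
  · exact (wfs_sub hstep hWF).1

include hroot hPs hstep in
lemma fs_no_in_r : ∀ a, (a, r) ∉ Fs Ps w L := fun a h =>
  hroot.not_to_r (fs_sub_D hroot hPs hstep h)

include hroot hv hPs hw0 hwL hstep hinj in
lemma fs_no_out_v : ∀ b, (v, b) ∉ Fs Ps w L := by
  rintro b (⟨hUE, -⟩ | hWF)
  · exact ue_no_out_v hPs hUE
  · exact no_wfs_from_v hroot hv hPs hw0 hwL hstep hinj hWF

include hroot hv hPs hw0 hwL hstep hinj in
lemma fs_in_unique {u a a' : V} (huv : u ≠ v)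
    (h : (a, u) ∈ Fs Ps w L) (h' : (a', u) ∈ Fs Ps w L) : a = a' := by
  have mixed : ∀ {x y : V}, (x, u) ∈ WFs w L → (y, u) ∈ UEdges Ps \ RBs w L → False := by
    intro x y hWF hUE'
    obtain ⟨hne, i, hiL, hw1, hw2⟩ := hWF
    have hi1L : i + 1 ≠ L := by
      intro hEq
      rw [hEq, hwL] at hw2
      exact huv (pair_eq_fst hw2).symm
    have hs := hstep (i + 1) (by omega)
    rw [hw2] at hs
    obtain ⟨c, hc, hcase⟩ := step_src_in hs
    rcases hcase with ⟨hcne, hcu⟩ | ⟨-, hnUI, -⟩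
    · have hrb : (c, u) ∈ RBs w L := ⟨hcne, i + 1, by omega, hw2, hc⟩
      have hca : c = y := ue_in_unique hroot hv hPs hcu hUE'.1 huv
      rw [hca] at hrb
      exact hUE'.2 hrb
    · exact hnUI (ue_to_ui hroot hPs hUE'.1 huv)
  rcases h with hUE | hWF <;> rcases h' with hUE' | hWF'
  · exact ue_in_unique hroot hv hPs hUE.1 hUE'.1 huv
  · exact (mixed hWF' hUE).elim
  · exact (mixed hWF hUE').elim
  · exact wfs_in_unique hinj hWF hWF'

include hroot hv hPs hw0 hwL hstep hinj in
lemma fs_out_unique {u b b' : V} (hur : u ≠ r)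
    (h : (u, b) ∈ Fs Ps w L) (h' : (u, b') ∈ Fs Ps w L) : b = b' := by
  have mixed : ∀ {x y : V}, (u, x) ∈ WFs w L → (u, y) ∈ UEdges Ps \ RBs w L → False := by
    intro x y hWF hUE'
    obtain ⟨hne, i, hiL, hw1, hw2⟩ := hWF
    have huv : u ≠ v := by
      intro hEq
      rw [hEq] at hw1
      exact walk_no_vtrue hroot hv hPs hw0 hwL hstep hinj i (by omega) hw1
    have hi0 : i ≠ 0 := by
      intro hEq
      rw [hEq, hw0] at hw1
      exact hur (pair_eq_fst hw1).symm
    have hs := hstep (i - 1) (by omega)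
    rw [show i - 1 + 1 = i by omega, hw1] at hs
    obtain ⟨z, hz, hcase⟩ := step_tgt_out hs
    rcases hcase with ⟨hzne, hzUE⟩ | ⟨heqz, hnUI, -⟩
    · have hrb : (u, z) ∈ RBs w L :=
        ⟨hzne, i - 1, by omega, hz, by rw [show i - 1 + 1 = i by omega]; exact hw1⟩
      have hzy : z = y := ue_out_unique hroot hv hPs hzUE hUE'.1 hur
      rw [hzy] at hrb
      exact hUE'.2 hrb
    · rw [← heqz] at hnUI
      exact hnUI (ue_from_ui hroot hv hPs hUE'.1 hur)
  rcases h with hUE | hWF <;> rcases h' with hUE' | hWF'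
  · exact ue_out_unique hroot hv hPs hUE.1 hUE'.1 hur
  · exact (mixed hWF' hUE).elim
  · exact (mixed hWF hUE').elim
  · exact wfs_out_unique hinj hWF hWF'

end WalkFacts
end Walks

section Flow
variable {D : Set (V × V)} {r v : V} {Ps : Set (DiPath V)} {w : ℕ → V × Bool} {L : ℕ}
  (hroot : IsRooted D r) (hv : v ≠ r) (hPs : IntDisjSystem D r v Ps)
  (hw0 : w 0 = (r, true)) (hwL : w L = (v, false))
  (hstep : ∀ i < L, Step D Ps v (w i) (w (i + 1)))
  (hinj : ∀ i ≤ L, ∀ j ≤ L, w i = w j → i = j)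

include hroot hv hPs hw0 hwL hstep hinj in
lemma fs_flow {u a : V} (hur : u ≠ r) (huv : u ≠ v) (h : (a, u) ∈ Fs Ps w L) :
    ∃ b, (u, b) ∈ Fs Ps w L := by
  rcases h with ⟨hUE, hRB⟩ | hWF
  · -- old kept in-edge
    have hUIu : u ∈ UInt Ps := ue_to_ui hroot hPs hUE huv
    obtain ⟨-, c, hc⟩ := ui_mem_edges hPs hUIu
    by_cases hcRB : (u, c) ∈ RBs w L
    · obtain ⟨hne, i, hiL, hw1, hw2⟩ := hcRB
      have hi1L : i + 1 ≠ L := by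
        intro hEq
        rw [hEq, hwL] at hw2
        exact Bool.noConfusion (pair_eq_snd hw2)
      have hs := hstep (i + 1) (by omega)
      rw [hw2] at hs
      obtain ⟨d, hd, hcase⟩ := step_src_out hs
      rcases hcase with ⟨hne2, hD2, hUE2⟩ | ⟨heq2, -⟩
      · exact ⟨d, Or.inr ⟨hne2, i + 1, by omega, hw2, hd⟩⟩
      · rw [← heq2] at hd
        have hi2L : i + 1 + 1 ≠ L := by
          intro hEq
          rw [hEq, hwL] at hd
          exact huv (pair_eq_fst hd).symm
        have hs2 := hstep (i + 1 + 1) (by omega)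
        rw [hd] at hs2
        obtain ⟨z, hz, hcase2⟩ := step_src_in hs2
        rcases hcase2 with ⟨hne3, hUE3⟩ | ⟨-, hnUI, -⟩
        · have hza : z = a := ue_in_unique hroot hv hPs hUE3 hUE huv
          refine absurd (?_ : (a, u) ∈ RBs w L) hRB
          rw [← hza]
          exact ⟨hne3, i + 1 + 1, by omega, hd, hz⟩
        · exact absurd hUIu hnUI
    · exact ⟨c, Or.inl ⟨hc, hcRB⟩⟩
  · -- new in-edge
    obtain ⟨hne, i, hiL, hw1, hw2⟩ := hWF
    have hi1L : i + 1 ≠ L := by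
      intro hEq
      rw [hEq, hwL] at hw2
      exact huv (pair_eq_fst hw2).symm
    have hs := hstep (i + 1) (by omega)
    rw [hw2] at hs
    obtain ⟨c, hc, hcase⟩ := step_src_in hs
    rcases hcase with ⟨hne2, hUE2⟩ | ⟨heq2, hnUI, -⟩
    · have hUIu : u ∈ UInt Ps := ue_to_ui hroot hPs hUE2 huv
      obtain ⟨-, d, hd⟩ := ui_mem_edges hPs hUIu
      by_cases hdRB : (u, d) ∈ RBs w L
      · obtain ⟨hne3, j, hjL, hw3, hw4⟩ := hdRB
        have hj1L : j + 1 ≠ L := by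
          intro hEq
          rw [hEq, hwL] at hw4
          exact Bool.noConfusion (pair_eq_snd hw4)
        have hs2 := hstep (j + 1) (by omega)
        rw [hw4] at hs2
        obtain ⟨z, hz, hcase2⟩ := step_src_out hs2
        rcases hcase2 with ⟨hne4, hD4, hUE4⟩ | ⟨heq4, -⟩
        · exact ⟨z, Or.inr ⟨hne4, j + 1, by omega, hw4, hz⟩⟩
        · rw [← heq4] at hz
          have hji : j + 1 + 1 = i + 1 :=
            hinj (j + 1 + 1) (by omega) (i + 1) (by omega) (by rw [hz, hw2])
          have hji' : j + 1 = i := by omega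
          rw [hji', hw1] at hw4
          exact (hne (pair_eq_fst hw4)).elim
      · exact ⟨d, Or.inl ⟨hd, hdRB⟩⟩
    · rw [heq2] at hc
      have hi2L : i + 1 + 1 ≠ L := by
        intro hEq
        rw [hEq, hwL] at hc
        exact Bool.noConfusion (pair_eq_snd hc)
      have hs2 := hstep (i + 1 + 1) (by omega)
      rw [hc] at hs2
      obtain ⟨z, hz, hcase2⟩ := step_src_out hs2
      rcases hcase2 with ⟨hne4, hD4, hUE4⟩ | ⟨-, hUI4⟩
      · exact ⟨z, Or.inr ⟨hne4, i + 1 + 1, by omega, hc, hz⟩⟩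
      · exact absurd hUI4 hnUI

include hw0 hinj in
lemma fs_out_r_new {b : V} (h : (r, b) ∈ Fs Ps w L) (hUE : (r, b) ∉ UEdges Ps) :
    w 1 = (b, false) := by
  rcases h with ⟨hUE', -⟩ | ⟨hne, i, hiL, hw1, hw2⟩
  · exact absurd hUE' hUE
  · have hi0 : i = 0 := hinj i (by omega) 0 (by omega) (by rw [hw1, hw0])
    subst hi0
    exact hw2

include hw0 hinj in
lemma fs_out_r_old {b : V} (h : (r, b) ∈ UEdges Ps) : (r, b) ∈ Fs Ps w L :=
  Or.inl ⟨h, no_rbs_from_r hw0 hinj⟩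

end Flow

section Augment

/-- Second vertex of a path (with default `r`). -/
def sec (r : V) (P : DiPath V) : V := P.verts.getD 1 r

lemma sec_eq {r : V} {P : DiPath V} (h : 1 < P.verts.length) : sec r P = P.verts[1]'h :=
  List.getD_eq_getElem _ _ h

variable {D : Set (V × V)} {r v : V} {Ps : Set (DiPath V)} {w : ℕ → V × Bool} {L : ℕ}

lemma augment (hroot : IsRooted D r) (hv : v ≠ r) (hPs : IntDisjSystem D r v Ps)
    (hw0 : w 0 = (r, true)) (hwL : w L = (v, false))
    (hstep : ∀ i < L, Step D Ps v (w i) (w (i + 1)))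
    (hinj : ∀ i ≤ L, ∀ j ≤ L, w i = w j → i = j)
    (hmax : ∀ Qs, IntDisjSystem D r v Qs →
      Cardinal.mk ↥(Qs \ Ps) ≤ Cardinal.mk ↥(Ps \ Qs)) : False := by
  classical
  set F := Fs Ps w L with hF
  have hFD : F ⊆ D := fs_sub_D hroot hPs hstep
  have hnoutv : ∀ b, (v, b) ∉ F := fs_no_out_v hroot hv hPs hw0 hwL hstep hinj
  have hninr : ∀ a, (a, r) ∉ F := fs_no_in_r hroot hPs hstep
  have hout : ∀ u b b', u ≠ r → (u, b) ∈ F → (u, b') ∈ F → b = b' :=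
    fun u b b' h1 h2 h3 => fs_out_unique hroot hv hPs hw0 hwL hstep hinj h1 h2 h3
  have hin : ∀ a a' u, u ≠ v → (a, u) ∈ F → (a', u) ∈ F → a = a' :=
    fun a a' u h1 h2 h3 => fs_in_unique hroot hv hPs hw0 hwL hstep hinj h1 h2 h3
  have hflow : ∀ u a, u ≠ r → u ≠ v → (a, u) ∈ F → ∃ b, (u, b) ∈ F :=
    fun u a h1 h2 h3 => fs_flow hroot hv hPs hw0 hwL hstep hinj h1 h2 h3
  obtain ⟨b1, hb1r, hwb1, hb1D, hb1UE⟩ := walk_first_arc hroot hv hPs hw0 hwL hstep hinj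
  set Qs : Set (DiPath V) := {Q | IsPath F r v Q} with hQsdef
  have hQsSys : IntDisjSystem D r v Qs := f_system hv hFD hnoutv hninr hout hin
  -- walk vertices
  set WV : Set V := {x | ∃ i ≤ L, w i = (x, false) ∨ w i = (x, true)} with hWV
  have hWVfin : WV.Finite := by
    have hsub : WV ⊆ (fun i => (w i).1) '' Set.Iic L := by
      rintro x ⟨i, hi, h | h⟩ <;> exact ⟨i, hi, by show (w i).1 = x; rw [h]⟩
    exact ((Set.finite_Iic L).image _).subset hsub
  set Touched : Set (DiPath V) := {P | P ∈ Ps ∧ ∃ x, x ∈ P.internal ∧ x ∈ WV} with hTouched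
  have hTfin : Touched.Finite := by
    set f : DiPath V → V := fun P =>
      if h : ∃ x, x ∈ P.internal ∧ x ∈ WV then h.choose else v with hf
    have hfmem : ∀ P ∈ Touched, f P ∈ P.internal ∧ f P ∈ WV := by
      intro P hP
      rw [hf]
      simp only [dif_pos hP.2]
      exact hP.2.choose_spec
    have himg : f '' Touched ⊆ WV := by
      rintro x ⟨P, hP, rfl⟩
      exact (hfmem P hP).2
    have hinjOn : Set.InjOn f Touched := by
      intro P hP P' hP' heq
      have h1 := (hfmem P hP).1
      have h2 := (hfmem P' hP').1
      rw [heq] at h1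
      have hne := (hPs.1 P hP.1).internal_ne h1
      exact shared_vertex hPs hP.1 hP'.1 h1.1 h2.1 hne.1 hne.2
    exact Set.Finite.of_finite_image (hWVfin.subset himg) hinjOn
  set S : Set V := WV ∪ ((⋃ P ∈ Touched, P.vertexSet) ∪ {v}) with hS
  have hSfin : S.Finite := by
    refine hWVfin.union (Set.Finite.union ?_ (Set.finite_singleton v))
    exact hTfin.biUnion (fun P _ => P.verts.finite_toSet)
  have hTsub : ∀ P ∈ Touched, P.vertexSet ⊆ S := by
    intro P hP x hx
    exact Or.inr (Or.inl (Set.mem_biUnion hP hx))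
  have hclose : ∀ x y, x ∈ S → x ≠ v → x ≠ r → (x, y) ∈ F → y ∈ S := by
    intro x y hxS hxv hxr hxy
    rcases hxy with ⟨hUE, -⟩ | hWF
    · rw [mem_UEdges_iff] at hUE
      obtain ⟨P0, hP0, he0⟩ := hUE
      have hfirst := (hPs.1 P0 hP0).2.1
      have hlast := (hPs.1 P0 hP0).2.2
      have hx0 : x ∈ P0.internal := by
        refine ⟨(DiPath.edge_mem_vertexSet he0).1, ?_⟩
        rintro (h1 | h1)
        · exact hxr (h1.trans hfirst)
        · exact hxv ((Set.mem_singleton_iff.1 h1).trans hlast)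
      have hyP0 : y ∈ P0.vertexSet := (DiPath.edge_mem_vertexSet he0).2
      have hP0T : P0 ∈ Touched := by
        rcases hxS with hxWV | hxRest
        · exact ⟨hP0, x, hx0, hxWV⟩
        · rcases hxRest with hxU | hxv'
          · rw [Set.mem_iUnion₂] at hxU
            obtain ⟨P'', hP'', hx''⟩ := hxU
            have hPP : P0 = P'' := shared_vertex hPs hP0 hP''.1 hx0.1 hx'' hxr hxv
            rw [hPP]
            exact hP''
          · exact absurd (Set.mem_singleton_iff.1 hxv') hxv
      exact hTsub P0 hP0T hyP0
    · obtain ⟨-, i, hiL, -, hw2⟩ := hWF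
      exact Or.inl ⟨i + 1, by omega, Or.inl hw2⟩
  -- paths destroyed by the augmentation are touched
  have hPsQs : Ps \ Qs ⊆ Touched := by
    rintro P ⟨hP, hPQ⟩
    have hp := hPs.1 P hP
    have hnotin : ¬ IsPathIn F P := fun h => hPQ ⟨h, hp.2.1, hp.2.2⟩
    have hex : ∃ e ∈ P.edges, e ∉ F := by
      by_contra hcon
      push_neg at hcon
      exact hnotin (fun e he => hcon e he)
    obtain ⟨⟨a, c⟩, heP, heF⟩ := hex
    have heUE : (a, c) ∈ UEdges Ps := mem_UEdges_iff.2 ⟨P, hP, heP⟩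
    have heRB : (a, c) ∈ RBs w L := by
      by_contra hcon
      exact heF (Or.inl ⟨heUE, hcon⟩)
    have hcv : c ≠ v := by
      rintro rfl
      exact no_rbs_to_v hwL hinj heRB
    obtain ⟨hne, i, hiL, hw1, hw2⟩ := heRB
    have hcint : c ∈ P.internal := by
      rw [DiPath.mem_edges_iff] at heP
      obtain ⟨k, hk, ha, hb⟩ := heP
      refine (hp.mem_internal_iff).2 ⟨k + 1, hk, hb, by omega, ?_⟩
      intro hEq
      exact hcv (by rw [← hb, DiPath.getElem_idx_eq _ hEq]; exact hp.getElem_last)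
    exact ⟨hP, c, hcint, ⟨i, by omega, Or.inl hw1⟩⟩
  have hfin1 : (Ps \ Qs).Finite := hTfin.subset hPsQs
  -- the second vertex of a destroyed path starts a trail
  have hsecF : ∀ P ∈ Ps \ Qs, (r, sec r P) ∈ UEdges Ps ∧ sec r P ≠ r ∧ sec r P ∈ S := by
    intro P hP
    have hp := hPs.1 P hP.1
    have h2 : 2 ≤ P.verts.length := hp.two_le_length (Ne.symm hv)
    have hsec : sec r P = P.verts[1]'(by omega) := sec_eq (by omega)
    refine ⟨?_, ?_, ?_⟩
    · rw [hsec]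
      exact mem_UEdges_iff.2 ⟨P, hP.1, first_edge_mem hv hPs hP.1⟩
    · intro hEq
      rw [hsec] at hEq
      have := hp.index_of_r (by omega) hEq
      omega
    · apply hTsub P (hPsQs hP)
      rw [hsec, DiPath.mem_vertexSet_iff, List.mem_iff_getElem]
      exact ⟨1, by omega, rfl⟩
  have htrailP : ∀ P : ↥(Ps \ Qs), ∃ Q : ↥(Qs \ Ps),
      ∃ h : 1 < (Q : DiPath V).verts.length, (Q : DiPath V).verts[1] = sec r (P : DiPath V) := by
    rintro ⟨P, hP⟩
    obtain ⟨hUE1, hne1, hS1⟩ := hsecF P hP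
    have hF1 : (r, sec r P) ∈ F := fs_out_r_old hw0 hinj hUE1
    obtain ⟨Q, hQpath, hlen, hsecQ⟩ := trail_exists hv hne1 hninr hin
      (fun u a h1 h2 h3 => hflow u a h1 h2 h3) hF1 hSfin hS1 hclose
    refine ⟨⟨Q, hQpath, ?_⟩, hlen, hsecQ⟩
    intro hQPs
    have hp := hPs.1 P hP.1
    have h2 : 2 ≤ P.verts.length := hp.two_le_length (Ne.symm hv)
    have hq2 : 2 ≤ Q.verts.length := (hPs.1 Q hQPs).two_le_length (Ne.symm hv)
    have heq2 : Q.verts[1]'(by omega) = P.verts[1]'(by omega) :=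
      hsecQ.trans (sec_eq (by omega))
    have hQP : Q = P := second_inj hroot hv hPs hQPs hP.1 heq2
    rw [hQP] at hQpath
    exact hP.2 hQpath
  -- the star trail
  have hL1 : 1 ≤ L := walk_L_pos hv hw0 hwL
  have hb1F : (r, b1) ∈ F := Or.inr ⟨Ne.symm hb1r, 0, by omega, hw0, hwb1⟩
  have hb1S : b1 ∈ S := Or.inl ⟨1, by omega, Or.inl hwb1⟩
  obtain ⟨Qst, hQstpath, hQstlen, hQstsec⟩ := trail_exists hv hb1r hninr hin
    (fun u a h1 h2 h3 => hflow u a h1 h2 h3) hb1F hSfin hb1S hclose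
  have hQstPs : Qst ∉ Ps := by
    intro hQstPs
    apply hb1UE
    rw [← hQstsec]
    exact mem_UEdges_iff.2 ⟨Qst, hQstPs, first_edge_mem hv hPs hQstPs⟩
  -- the injection
  choose tr htrlen htrsec using htrailP
  have hfin2 : (Qs \ Ps).Finite := by
    rw [← Cardinal.lt_aleph0_iff_set_finite]
    exact lt_of_le_of_lt (hmax Qs hQsSys) (Cardinal.lt_aleph0_iff_set_finite.2 hfin1)
  haveI := hfin1.to_subtype
  haveI := hfin2.to_subtype
  set g : ↥(Ps \ Qs) ⊕ Unit → ↥(Qs \ Ps) :=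
    Sum.elim (fun P => tr P) (fun _ => ⟨Qst, hQstpath, hQstPs⟩) with hg
  have hstarsec : ∀ P : ↥(Ps \ Qs), ((tr P : ↥(Qs \ Ps)) : DiPath V) ≠ Qst := by
    intro P hEq
    have hs1 : sec r ((tr P : ↥(Qs \ Ps)) : DiPath V) = sec r (P : DiPath V) :=
      (sec_eq (htrlen P)).trans (htrsec P)
    rw [hEq] at hs1
    have hs2 : sec r Qst = b1 := (sec_eq hQstlen).trans hQstsec
    have hsecP : sec r (P : DiPath V) = b1 := hs1.symm.trans hs2
    apply hb1UE
    rw [← hsecP]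
    exact (hsecF P P.2).1
  have hginj : Function.Injective g := by
    rintro (P | u) (P' | u') heq <;>
      simp only [hg, Sum.elim_inl, Sum.elim_inr] at heq
    · -- both trails
      have hs1 : sec r ((tr P : ↥(Qs \ Ps)) : DiPath V) = sec r (P : DiPath V) :=
        (sec_eq (htrlen P)).trans (htrsec P)
      have hs2 : sec r ((tr P' : ↥(Qs \ Ps)) : DiPath V) = sec r (P' : DiPath V) :=
        (sec_eq (htrlen P')).trans (htrsec P')
      rw [heq] at hs1
      have hsec : sec r (P : DiPath V) = sec r (P' : DiPath V) := hs1.symm.trans hs2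
      have hp := hPs.1 P P.2.1
      have hp' := hPs.1 P' P'.2.1
      have h2' : 2 ≤ (P : DiPath V).verts.length := hp.two_le_length (Ne.symm hv)
      have h2'' : 2 ≤ (P' : DiPath V).verts.length := hp'.two_le_length (Ne.symm hv)
      have heq2 : (P : DiPath V).verts[1]'(by omega) = (P' : DiPath V).verts[1]'(by omega) :=
        (sec_eq (by omega)).symm.trans (hsec.trans (sec_eq (by omega)))
      have := second_inj hroot hv hPs P.2.1 P'.2.1 heq2
      exact congrArg Sum.inl (Subtype.ext this)
    · exact absurd (congrArg Subtype.val heq) (hstarsec P)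
    · exact absurd (congrArg Subtype.val heq).symm (hstarsec P')
    · exact congrArg Sum.inr (Subsingleton.elim u u')
  have hcard := Nat.card_le_card_of_injective g hginj
  rw [Nat.card_sum] at hcard
  have hpunit : Nat.card Unit = 1 := by simp
  rw [hpunit] at hcard
  obtain ⟨emb⟩ := Cardinal.le_def _ _ |>.1 (hmax Qs hQsSys)
  have hmono := Nat.card_le_card_of_injective emb emb.injective
  omega

lemma no_reach (hroot : IsRooted D r) (hv : v ≠ r) (hPs : IntDisjSystem D r v Ps)
    (hmax : ∀ Qs, IntDisjSystem D r v Qs →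
      Cardinal.mk ↥(Qs \ Ps) ≤ Cardinal.mk ↥(Ps \ Qs)) :
    ¬ Reach D Ps r v (v, false) := by
  intro hreach
  obtain ⟨w, L, hw0, hwL, hstep, hinj⟩ := exists_nodup_chain_fn hreach
  exact augment hroot hv hPs hw0 hwL hstep hinj hmax

end Augment

/-- `ℑ_D(v)` is exactly the set of strongly maximal systems of internally disjoint
`r→v` paths of `D`. -/
theorem strongly_maximal_char {V : Type u} [Infinite V] (r : V) (D : Set (V × V))
    (hroot : IsRooted D r) (v : V) (hv : v ≠ r) (Ps : Set (DiPath V)) :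
    EMSystem D r v Ps ↔
      IntDisjSystem D r v Ps ∧
        ∀ Qs, IntDisjSystem D r v Qs →
          Cardinal.mk ↥(Qs \ Ps) ≤ Cardinal.mk ↥(Ps \ Qs) := by
  constructor
  · intro hEM
    exact ⟨hEM.1, fun Qs hQs => em_to_strong hroot hv hEM hQs⟩
  · rintro ⟨hPsSys, hmax⟩
    exact ⟨hPsSys, sel_of_not_reach hroot hv hPsSys (no_reach hroot hv hPsSys hmax)⟩

end FlamePaper
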